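/- arXiv:1001.2621 — 8 statements merged into one kernel-verified Lean document; each statement's English description precedes it below -/
import Mathlib

section
/- Let E be a real Banach space, let η_X, η_Y : E → E be smooth vector fields, and let X, Y : ℝ → E → E be smooth flows of η_X and η_Y respectively. Set ξ₁ := η_Y − η_X and ξ₂ := [η_X, η_Y], the Lie bracket ξ₂ x = (fderiv ℝ η_Y x)(η_X x) − (fderiv ℝ η_X x)(η_Y x) (in the opposite bracket convention of the paper this is written ξ₂ = [η_Y, η_X]). Then for every twice continuously differentiable f : E → ℝ and every p ∈ E, the second derivative at λ = 0 of λ ↦ f (X (−λ) (Y λ p)) equals (ξ₂·f)(p) + (ξ₁·(ξ₁·f))(p). In other words, the second-order generator of the gauge transformation Φ_λ = X_λ^{-1} ∘ Y_λ is the commutator of the generators of the two gauge choices. -/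
/-!
Write the curve as `G ∘ γ` with `G = uncurry X` and `γ λ = (-λ, Y λ p)`. The second-order
chain rule `(g ∘ c)'' = D²g (c', c') + Dg c''` reduces everything to the first two derivatives of `G` at
`(0, p)`, which the flow determines: `X 0 = id` and `∂ₜG = ηX ∘ G` give
`DG (0, y) (s, w) = s • ηX y + w`, and differentiating once more (the mixed term via symmetry of
`D²G`) gives `D²G (0, p) ((s, w), (s', w')) = s s' DηX (ηX p) + s' DηX w + s DηX w'`.
With `γ' = (-1, ηY)` and `γ'' = (0, DηY ηY)` the curve has velocity `ξ₁ p` and acceleration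
`DηX ηX - 2 DηX ηY + DηY ηY = ξ₂ p + Dξ₁ (ξ₁ p)` at `λ = 0`.
-/

open Function

theorem hasDerivAt_deriv_comp {F G : Type*} [NormedAddCommGroup F] [NormedSpace ℝ F]
    [NormedAddCommGroup G] [NormedSpace ℝ G] {g : F → G} {c : ℝ → F} {a : F} {t : ℝ}
    (hg : Differentiable ℝ g) (hg' : DifferentiableAt ℝ (fderiv ℝ g) (c t))
    (hc : Differentiable ℝ c) (hc' : HasDerivAt (deriv c) a t) :
    HasDerivAt (deriv (g ∘ c))
      (fderiv ℝ (fderiv ℝ g) (c t) (deriv c t) (deriv c t) + fderiv ℝ g (c t) a) t := by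
  have hderiv : deriv (g ∘ c) = fun s => fderiv ℝ g (c s) (deriv c s) :=
    funext fun s => fderiv_comp_deriv s (hg _) (hc s)
  rw [hderiv]
  exact (hg'.hasFDerivAt.comp_hasDerivAt t (hc t).hasDerivAt).clm_apply hc'

section Flow

variable {E : Type*} [NormedAddCommGroup E] [NormedSpace ℝ E] {η : E → E} {X : ℝ → E → E}

theorem fderiv_flow_apply_time
    (hflow : ∀ (t : ℝ) (y : E), HasDerivAt (fun s => X s y) (η (X t y)) t) {t : ℝ} {y : E}
    (hd : DifferentiableAt ℝ (uncurry X) (t, y)) :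
    fderiv ℝ (uncurry X) (t, y) (1, 0) = η (X t y) := by
  have h := hd.hasFDerivAt.comp_hasDerivAt t ((hasDerivAt_id t).prodMk (hasDerivAt_const t y))
  exact h.unique (hflow t y)

theorem fderiv_flow_zero (hX0 : ∀ y, X 0 y = y)
    (hflow : ∀ (t : ℝ) (y : E), HasDerivAt (fun s => X s y) (η (X t y)) t) {y : E}
    (hd : DifferentiableAt ℝ (uncurry X) (0, y)) :
    fderiv ℝ (uncurry X) (0, y)
      = (ContinuousLinearMap.fst ℝ ℝ E).smulRight (η y) + ContinuousLinearMap.snd ℝ ℝ E := by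
  have hspace : (fderiv ℝ (uncurry X) (0, y)).comp (ContinuousLinearMap.inr ℝ ℝ E)
      = ContinuousLinearMap.id ℝ E := by
    have h := hd.hasFDerivAt.comp y (hasFDerivAt_prodMk_right (0 : ℝ) y)
    have hX0' : uncurry X ∘ (fun z : E => ((0 : ℝ), z)) = id := funext hX0
    rw [hX0'] at h
    exact h.unique (hasFDerivAt_id y)
  ext v
  · simpa [hX0] using fderiv_flow_apply_time hflow hd
  · simpa using congrArg (fun L : E →L[ℝ] E => L v) hspace

variable (hX0 : ∀ y, X 0 y = y)
    (hflow : ∀ (t : ℝ) (y : E), HasDerivAt (fun s => X s y) (η (X t y)) t)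
    (hX : ContDiff ℝ 2 (uncurry X)) {p : E} (hη : DifferentiableAt ℝ η p)
include hX0 hflow hX hη

theorem fderiv_fderiv_flow_zero_apply_space (w : E) (v : ℝ × E) :
    fderiv ℝ (fderiv ℝ (uncurry X)) (0, p) (0, w) v = v.1 • fderiv ℝ η p w := by
  have hd : DifferentiableAt ℝ (fderiv ℝ (uncurry X)) (0, p) :=
    (hX.fderiv_right le_rfl).differentiable one_ne_zero _
  have h := (hd.hasFDerivAt.comp p (hasFDerivAt_prodMk_right (0 : ℝ) p)).clm_apply
    (hasFDerivAt_const v p)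
  have heq : ∀ y, fderiv ℝ (uncurry X) (0, y) v = v.1 • η y + v.2 := fun y => by
    rw [fderiv_flow_zero hX0 hflow (hX.differentiable two_ne_zero _)]
    rfl
  have h' := ((hη.hasFDerivAt.const_smul v.1).add_const v.2).congr_of_eventuallyEq
    (Filter.Eventually.of_forall heq)
  simpa using congrArg (fun L : E →L[ℝ] E => L w) (h.unique h')

theorem fderiv_fderiv_flow_zero_apply_time_time :
    fderiv ℝ (fderiv ℝ (uncurry X)) (0, p) (1, 0) (1, 0) = fderiv ℝ η p (η p) := by
  have hd : DifferentiableAt ℝ (fderiv ℝ (uncurry X)) (0, p) :=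
    (hX.fderiv_right le_rfl).differentiable one_ne_zero _
  have hcurve : HasDerivAt (fun t : ℝ => fderiv ℝ (uncurry X) (t, p))
      (fderiv ℝ (fderiv ℝ (uncurry X)) (0, p) (1, 0)) 0 :=
    hd.hasFDerivAt.comp_hasDerivAt 0 ((hasDerivAt_id (0 : ℝ)).prodMk (hasDerivAt_const (0 : ℝ) p))
  have h := hcurve.clm_apply (hasDerivAt_const (0 : ℝ) ((1 : ℝ), (0 : E)))
  have heq : ∀ t, fderiv ℝ (uncurry X) (t, p) (1, 0) = η (X t p) :=
    fun t => fderiv_flow_apply_time hflow (hX.differentiable two_ne_zero _)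
  have h' := (hη.hasFDerivAt.comp_hasDerivAt_of_eq 0 (hflow 0 p) (hX0 p).symm)
    |>.congr_of_eventuallyEq (Filter.Eventually.of_forall heq)
  simpa [hX0] using h.unique h'

theorem fderiv_fderiv_flow_zero_apply (s s' : ℝ) (w w' : E) :
    fderiv ℝ (fderiv ℝ (uncurry X)) (0, p) (s, w) (s', w')
      = (s * s') • fderiv ℝ η p (η p) + s' • fderiv ℝ η p w + s • fderiv ℝ η p w' := by
  have hsymm : IsSymmSndFDerivAt ℝ (uncurry X) (0, p) :=
    hX.contDiffAt.isSymmSndFDerivAt (by simp)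
  have hsplit : ∀ (r : ℝ) (u : E), ((r, u) : ℝ × E) = r • (1, 0) + (0, u) := fun r u => by
    ext <;> simp
  rw [hsplit s w, hsplit s' w']
  simp only [map_add, map_smul, add_apply, smul_apply,
    hsymm.eq (1, 0) (0, w'), fderiv_fderiv_flow_zero_apply_time_time hX0 hflow hX hη,
    fderiv_fderiv_flow_zero_apply_space hX0 hflow hX hη]
  module

end Flow

section Gauge

variable {E : Type*} [NormedAddCommGroup E] [NormedSpace ℝ E] {ηX ηY : E → E} {X Y : ℝ → E → E}
  (p : E)

theorem hasDerivAt_neg_prodMk_flow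
    (hYflow : ∀ (t : ℝ) (y : E), HasDerivAt (fun s => Y s y) (ηY (Y t y)) t) (l : ℝ) :
    HasDerivAt (fun t => (-t, Y t p)) ((-1 : ℝ), ηY (Y l p)) l :=
  (hasDerivAt_neg l).prodMk (hYflow l p)

variable {p} (hX0 : ∀ y, X 0 y = y)
  (hXflow : ∀ (t : ℝ) (y : E), HasDerivAt (fun s => X s y) (ηX (X t y)) t)
  (hX : ContDiff ℝ 2 (uncurry X)) (hY0 : ∀ y, Y 0 y = y)
  (hYflow : ∀ (t : ℝ) (y : E), HasDerivAt (fun s => Y s y) (ηY (Y t y)) t)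

include hX hYflow in
theorem differentiable_flow_neg_comp_flow : Differentiable ℝ fun l => X (-l) (Y l p) :=
  fun l => (hX.differentiable two_ne_zero _).comp l
    (hasDerivAt_neg_prodMk_flow p hYflow l).differentiableAt

include hX0 hXflow hX hY0 hYflow in
theorem deriv_flow_neg_comp_flow_zero : deriv (fun l => X (-l) (Y l p)) 0 = ηY p - ηX p := by
  have hγ0 : ((0 : ℝ), p) = (-0, Y 0 p) := by simp [hY0]
  have h := ((hX.differentiable two_ne_zero (0, p)).hasFDerivAt.comp_hasDerivAt_of_eq 0
    (hasDerivAt_neg_prodMk_flow p hYflow 0) hγ0).deriv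
  refine h.trans ?_
  rw [hY0, fderiv_flow_zero hX0 hXflow (hX.differentiable two_ne_zero _)]
  simp [sub_eq_neg_add]

include hX0 hXflow hX hY0 hYflow in
theorem hasDerivAt_deriv_flow_neg_comp_flow (hηX : DifferentiableAt ℝ ηX p)
    (hηY : DifferentiableAt ℝ ηY p) :
    HasDerivAt (deriv fun l => X (-l) (Y l p))
      (fderiv ℝ ηX p (ηX p) - (2 : ℝ) • fderiv ℝ ηX p (ηY p) + fderiv ℝ ηY p (ηY p)) 0 := by
  have hγ : Differentiable ℝ fun l => ((-l : ℝ), Y l p) :=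
    fun l => (hasDerivAt_neg_prodMk_flow p hYflow l).differentiableAt
  have hderivγ : deriv (fun l => ((-l : ℝ), Y l p)) = fun l => ((-1 : ℝ), ηY (Y l p)) :=
    funext fun l => (hasDerivAt_neg_prodMk_flow p hYflow l).deriv
  have hγ' : HasDerivAt (deriv fun l => ((-l : ℝ), Y l p))
      ((0 : ℝ), fderiv ℝ ηY p (ηY (Y 0 p))) 0 := by
    rw [hderivγ]
    exact (hasDerivAt_const _ _).prodMk
      (hηY.hasFDerivAt.comp_hasDerivAt_of_eq 0 (hYflow 0 p) (hY0 p).symm)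
  have h := hasDerivAt_deriv_comp (hX.differentiable two_ne_zero)
    ((hX.fderiv_right le_rfl).differentiable one_ne_zero _) hγ hγ'
  simp only [hderivγ, neg_zero, hY0] at h
  refine h.congr_deriv ?_
  rw [fderiv_fderiv_flow_zero_apply hX0 hXflow hX hηX,
    fderiv_flow_zero hX0 hXflow (hX.differentiable two_ne_zero _)]
  simp only [add_apply, ContinuousLinearMap.smulRight_apply, ContinuousLinearMap.coe_fst',
    ContinuousLinearMap.coe_snd', zero_smul, zero_add]
  module

end Gauge

theorem second_order_gauge_generator_general
    {E : Type*} [NormedAddCommGroup E] [NormedSpace ℝ E]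
    (ηX ηY : E → E)
    (hηX : ContDiff ℝ (⊤ : ℕ∞) ηX) (hηY : ContDiff ℝ (⊤ : ℕ∞) ηY)
    (X Y : ℝ → E → E)
    (hX0 : ∀ p, X 0 p = p)
    (hXflow : ∀ (lam : ℝ) (p : E), HasDerivAt (fun t => X t p) (ηX (X lam p)) lam)
    (hXsmooth : ContDiff ℝ (⊤ : ℕ∞) (fun q : ℝ × E => X q.1 q.2))
    (hY0 : ∀ p, Y 0 p = p)
    (hYflow : ∀ (lam : ℝ) (p : E), HasDerivAt (fun t => Y t p) (ηY (Y lam p)) lam)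
    (ξ₁ ξ₂ : E → E)
    (hξ₁ : ξ₁ = fun x => ηY x - ηX x)
    (hξ₂ : ξ₂ = fun x => (fderiv ℝ ηY x) (ηX x) - (fderiv ℝ ηX x) (ηY x))
    (f : E → ℝ) (hf : ContDiff ℝ 2 f) (p : E) :
    iteratedDeriv 2 (fun lam : ℝ => f (X (-lam) (Y lam p))) 0
      = (fderiv ℝ f p) (ξ₂ p)
        + (fderiv ℝ (fun x => (fderiv ℝ f x) (ξ₁ x)) p) (ξ₁ p) := by
  have hX : ContDiff ℝ 2 (uncurry X) := hXsmooth.of_le (WithTop.coe_le_coe.2 le_top)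
  have hηX' := hηX.differentiable (by simp)
  have hηY' := hηY.differentiable (by simp)
  have hf' : Differentiable ℝ (fderiv ℝ f) := (hf.fderiv_right le_rfl).differentiable one_ne_zero
  have hξ₁' : DifferentiableAt ℝ ξ₁ p := hξ₁ ▸ (hηY' p).sub (hηX' p)
  have hcurve := hasDerivAt_deriv_comp (hf.differentiable two_ne_zero) (hf' _)
    (differentiable_flow_neg_comp_flow hX hYflow)
    (hasDerivAt_deriv_flow_neg_comp_flow hX0 hXflow hX hY0 hYflow (hηX' p) (hηY' p))
  have hacceleration : fderiv ℝ ηX p (ηX p) - (2 : ℝ) • fderiv ℝ ηX p (ηY p)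
      + fderiv ℝ ηY p (ηY p) = ξ₂ p + fderiv ℝ ξ₁ p (ξ₁ p) := by
    subst hξ₁ hξ₂
    rw [fderiv_fun_sub (hηY' p) (hηX' p)]
    simp only [sub_apply, map_sub]
    module
  have hvelocity : ηY p - ηX p = ξ₁ p := by rw [hξ₁]
  rw [deriv_flow_neg_comp_flow_zero hX0 hXflow hX hY0 hYflow, neg_zero, hY0, hX0, hvelocity,
    hacceleration] at hcurve
  rw [iteratedDeriv_succ, iteratedDeriv_one]
  refine hcurve.deriv.trans ?_
  rw [fderiv_clm_apply (hf' p) hξ₁']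
  simp only [map_add, add_apply, ContinuousLinearMap.comp_apply, ContinuousLinearMap.flip_apply]
  ring

/-- For two smooth flows `X`, `Y` of smooth vector fields `ηX`, `ηY` on a real
Banach space `E`, the second-order generator of the gauge transformation
`Φ_λ = X_λ⁻¹ ∘ Y_λ = X_{-λ} ∘ Y_λ` is the commutator `ξ₂ = [ηX, ηY]`: for every C² scalar
function `f`, `d²/dλ²|₀ f (X (−λ) (Y λ p)) = (ξ₂·f)(p) + (ξ₁·(ξ₁·f))(p)` with
`ξ₁ = ηY − ηX` and `ξ₂ x = (fderiv ℝ ηY x)(ηX x) − (fderiv ℝ ηX x)(ηY x)`. -/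
theorem second_order_gauge_generator
    {E : Type*} [NormedAddCommGroup E] [NormedSpace ℝ E] [CompleteSpace E]
    (ηX ηY : E → E)
    (hηX : ContDiff ℝ (⊤ : ℕ∞) ηX) (hηY : ContDiff ℝ (⊤ : ℕ∞) ηY)
    (X Y : ℝ → E → E)
    (hX0 : ∀ p, X 0 p = p)
    (hXflow : ∀ (lam : ℝ) (p : E), HasDerivAt (fun t => X t p) (ηX (X lam p)) lam)
    (hXsmooth : ContDiff ℝ (⊤ : ℕ∞) (fun q : ℝ × E => X q.1 q.2))
    (hY0 : ∀ p, Y 0 p = p)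
    (hYflow : ∀ (lam : ℝ) (p : E), HasDerivAt (fun t => Y t p) (ηY (Y lam p)) lam)
    (hYsmooth : ContDiff ℝ (⊤ : ℕ∞) (fun q : ℝ × E => Y q.1 q.2))
    (ξ₁ ξ₂ : E → E)
    (hξ₁ : ξ₁ = fun x => ηY x - ηX x)
    (hξ₂ : ξ₂ = fun x => (fderiv ℝ ηY x) (ηX x) - (fderiv ℝ ηX x) (ηY x))
    (f : E → ℝ) (hf : ContDiff ℝ 2 f) (p : E) :
    iteratedDeriv 2 (fun lam : ℝ => f (X (-lam) (Y lam p))) 0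
      = (fderiv ℝ f p) (ξ₂ p)
        + (fderiv ℝ (fun x => (fderiv ℝ f x) (ξ₁ x)) p) (ξ₁ p) :=
  second_order_gauge_generator_general ηX ηY hηX hηY X Y hX0 hXflow hXsmooth hY0 hYflow ξ₁ ξ₂ hξ₁
    hξ₂ f hf p
end

section
/- Let E be a real Banach space, let Q : ℝ → E → ℝ be a perturbed scalar field with (λ,p) ↦ Q λ p infinitely differentiable, and let X, Y : ℝ → E → E be smooth flows of smooth vector fields η_X, η_Y : E → E (two gauge choices). Write Q₀ := Q 0 for the background value, and define the first-order perturbation in the gauge X by (⁽¹⁾_X Q)(p) := d/dλ|_{λ=0} Q λ (X λ p), and similarly for Y. Then the first-order gauge transformation rule holds: for every p ∈ E, (⁽¹⁾_Y Q)(p) − (⁽¹⁾_X Q)(p) = (fderiv ℝ Q₀ p)(η_Y p − η_X p), i.e. the two representations differ by the Lie derivative of the background value Q₀ along ξ₁ = η_Y − η_X. -/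
/-! The pull-back `λ ↦ Q λ (g λ p)` is the joint map `(λ, x) ↦ Q λ x` along the curve
`λ ↦ (λ, g λ p)`, whose velocity at `λ = 0` is `(1, η p)`. By the chain rule its derivative
there is `∂_λ Q 0 p + (fderiv ℝ Q₀ p) (η p)`: the explicit `λ`-dependence of `Q` contributes the
same term in every gauge, so it cancels in the difference of two gauges. -/

open ContinuousLinearMap

section TotalDerivative

variable {E F : Type*} [NormedAddCommGroup E] [NormedSpace ℝ E]
  [NormedAddCommGroup F] [NormedSpace ℝ F]

theorem HasFDerivAt.hasDerivAt_comp_graph {f : ℝ × E → F} {f' : ℝ × E →L[ℝ] F}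
    {c : ℝ → E} {v : E} {t : ℝ} (hf : HasFDerivAt f f' (t, c t)) (hc : HasDerivAt c v t) :
    HasDerivAt (fun s => f (s, c s)) (f' (1, v)) t :=
  hf.comp_hasDerivAt t ((hasDerivAt_id t).prodMk hc)

theorem HasFDerivAt.hasFDerivAt_comp_prodMk_right {f : ℝ × E → F} {f' : ℝ × E →L[ℝ] F}
    {t : ℝ} {x : E} (hf : HasFDerivAt f f' (t, x)) :
    HasFDerivAt (fun y => f (t, y)) (f'.comp (inr ℝ ℝ E)) x :=
  hf.comp x (hasFDerivAt_prodMk_right t x)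

theorem deriv_comp_curve_eq_deriv_add_fderiv {Q : ℝ → E → F} {c : ℝ → E} {v : E} {t : ℝ}
    (hQ : DifferentiableAt ℝ (fun q : ℝ × E => Q q.1 q.2) (t, c t)) (hc : HasDerivAt c v t) :
    deriv (fun s => Q s (c s)) t = deriv (fun s => Q s (c t)) t + fderiv ℝ (Q t) (c t) v := by
  set f' := fderiv ℝ (fun q : ℝ × E => Q q.1 q.2) (t, c t)
  have hf := hQ.hasFDerivAt
  have h_total : deriv (fun s => Q s (c s)) t = f' (1, v) :=
    (hf.hasDerivAt_comp_graph hc).deriv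
  have h_partial : deriv (fun s => Q s (c t)) t = f' (1, 0) :=
    (hf.hasDerivAt_comp_graph (c := fun _ => c t) (hasDerivAt_const t (c t))).deriv
  have h_slice : fderiv ℝ (Q t) (c t) v = f' (0, v) :=
    congrArg (· v) hf.hasFDerivAt_comp_prodMk_right.fderiv
  rw [h_total, h_partial, h_slice, ← map_add, Prod.mk_add_mk, add_zero, zero_add]

end TotalDerivative

theorem first_order_gauge_transformation_rule_general
    {E : Type*} [NormedAddCommGroup E] [NormedSpace ℝ E]
    (Q : ℝ → E → ℝ)
    (hQ : ContDiff ℝ (⊤ : ℕ∞) (fun q : ℝ × E => Q q.1 q.2))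
    (ηX ηY : E → E)
    (X Y : ℝ → E → E)
    (hX0 : ∀ p, X 0 p = p)
    (hXflow : ∀ (lam : ℝ) (p : E), HasDerivAt (fun t => X t p) (ηX (X lam p)) lam)
    (hY0 : ∀ p, Y 0 p = p)
    (hYflow : ∀ (lam : ℝ) (p : E), HasDerivAt (fun t => Y t p) (ηY (Y lam p)) lam)
    (p : E) :
    deriv (fun lam : ℝ => Q lam (Y lam p)) 0 - deriv (fun lam : ℝ => Q lam (X lam p)) 0
      = (fderiv ℝ (Q 0) p) (ηY p - ηX p) := by
  have hQ_diff : DifferentiableAt ℝ (fun q : ℝ × E => Q q.1 q.2) (0, p) :=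
    hQ.differentiable (by simp) _
  have hY := deriv_comp_curve_eq_deriv_add_fderiv (c := fun t => Y t p)
    (by rwa [hY0]) (hYflow 0 p)
  have hX := deriv_comp_curve_eq_deriv_add_fderiv (c := fun t => X t p)
    (by rwa [hX0]) (hXflow 0 p)
  simp only [hY0, hX0] at hY hX
  rw [hY, hX, map_sub]
  abel

/-- First-order gauge transformation rule. For a smooth perturbed scalar field
`Q : ℝ → E → ℝ` and two gauge choices given by smooth flows `X`, `Y` of smooth vector fields
`ηX`, `ηY`, the first-order perturbations `⁽¹⁾_g Q (p) = d/dλ|₀ Q λ (g λ p)` satisfy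
`⁽¹⁾_Y Q − ⁽¹⁾_X Q = £_{ξ₁} Q₀` with `ξ₁ = ηY − ηX` and `Q₀ = Q 0`. -/
theorem first_order_gauge_transformation_rule
    {E : Type*} [NormedAddCommGroup E] [NormedSpace ℝ E] [CompleteSpace E]
    (Q : ℝ → E → ℝ)
    (hQ : ContDiff ℝ (⊤ : ℕ∞) (fun q : ℝ × E => Q q.1 q.2))
    (ηX ηY : E → E)
    (hηX : ContDiff ℝ (⊤ : ℕ∞) ηX) (hηY : ContDiff ℝ (⊤ : ℕ∞) ηY)
    (X Y : ℝ → E → E)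
    (hX0 : ∀ p, X 0 p = p)
    (hXflow : ∀ (lam : ℝ) (p : E), HasDerivAt (fun t => X t p) (ηX (X lam p)) lam)
    (hXsmooth : ContDiff ℝ (⊤ : ℕ∞) (fun q : ℝ × E => X q.1 q.2))
    (hY0 : ∀ p, Y 0 p = p)
    (hYflow : ∀ (lam : ℝ) (p : E), HasDerivAt (fun t => Y t p) (ηY (Y lam p)) lam)
    (hYsmooth : ContDiff ℝ (⊤ : ℕ∞) (fun q : ℝ × E => Y q.1 q.2))
    (p : E) :
    deriv (fun lam : ℝ => Q lam (Y lam p)) 0 - deriv (fun lam : ℝ => Q lam (X lam p)) 0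
      = (fderiv ℝ (Q 0) p) (ηY p - ηX p) :=
  first_order_gauge_transformation_rule_general Q hQ ηX ηY X Y hX0 hXflow hY0 hYflow p
end

section
/- Let E be a real Banach space, let Q : ℝ → E → ℝ be a perturbed scalar field with (λ,p) ↦ Q λ p infinitely differentiable, and let X, Y : ℝ → E → E be smooth flows of smooth vector fields η_X, η_Y : E → E. Write Q₀ := Q 0, (⁽¹⁾_X Q)(p) := d/dλ|_{λ=0} Q λ (X λ p) and (⁽²⁾_X Q)(p) := d²/dλ²|_{λ=0} Q λ (X λ p), similarly for Y. Set ξ₁ := η_Y − η_X and ξ₂ := [η_X, η_Y] with the bracket convention [V,W](x) = (fderiv ℝ W x)(V x) − (fderiv ℝ V x)(W x). Then the second-order gauge transformation rule holds: for every p ∈ E, (⁽²⁾_Y Q)(p) − (⁽²⁾_X Q)(p) = 2 (ξ₁·(⁽¹⁾_X Q))(p) + (ξ₂·Q₀)(p) + (ξ₁·(ξ₁·Q₀))(p). -/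
/-! With `F = uncurry Q` and `B` its Hessian at `(0, p)`, the second derivative of `Q λ (X λ p)`
at `λ = 0` along a flow of `η` is `B v v + Q₀'(p) (η'(p) (η p))` with `v = (1, η p)`, and the first
order perturbation is `x ↦ F'(0, x) (1, η x)`. Writing `(1, ηY p) = (1, ηX p) + (0, ξ₁ p)` and using
the symmetry of `B`, the Hessian terms of the difference are exactly those of `2 ξ₁·⁽¹⁾_X Q` and
`ξ₁·(ξ₁·Q₀)`; the first-order terms match by
`ηY'ηY - ηX'ηX = 2 ηX'ξ₁ + [ηX, ηY] + ξ₁'ξ₁`. -/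

open Function ContinuousLinearMap

section SliceCalculus

variable {E : Type*} [NormedAddCommGroup E] [NormedSpace ℝ E] {Q : ℝ → E → ℝ}

theorem hasDerivAt_uncurry_comp_graph {γ : ℝ → E} {v : E} {t : ℝ}
    (hQ : DifferentiableAt ℝ (uncurry Q) (t, γ t)) (hγ : HasDerivAt γ v t) :
    HasDerivAt (fun s => Q s (γ s)) (fderiv ℝ (uncurry Q) (t, γ t) (1, v)) t :=
  hQ.hasFDerivAt.comp_hasDerivAt (f := fun s => (s, γ s)) t ((hasDerivAt_id t).prodMk hγ)

theorem fderiv_slice_eq_comp_inr {t : ℝ} {x : E} (hQ : DifferentiableAt ℝ (uncurry Q) (t, x)) :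
    fderiv ℝ (Q t) x = (fderiv ℝ (uncurry Q) (t, x)).comp (inr ℝ ℝ E) :=
  (hQ.hasFDerivAt.comp x (hasFDerivAt_prodMk_right t x)).fderiv

theorem fderiv_fderiv_uncurry_slice_apply {t c : ℝ} {V : E → E} {p : E}
    (hQ : DifferentiableAt ℝ (uncurry Q) (t, p))
    (hQ' : DifferentiableAt ℝ (fderiv ℝ (uncurry Q)) (t, p)) (hV : DifferentiableAt ℝ V p)
    (w : E) :
    fderiv ℝ (fun x => fderiv ℝ (uncurry Q) (t, x) (c, V x)) p w
      = fderiv ℝ (fderiv ℝ (uncurry Q)) (t, p) (0, w) (c, V p)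
        + fderiv ℝ (Q t) p (fderiv ℝ V p w) := by
  have hD : HasFDerivAt (fun x => fderiv ℝ (uncurry Q) (t, x))
      ((fderiv ℝ (fderiv ℝ (uncurry Q)) (t, p)).comp (inr ℝ ℝ E)) p :=
    hQ'.hasFDerivAt.comp p (hasFDerivAt_prodMk_right t p)
  have hu := (hasFDerivAt_const c p).prodMk hV.hasFDerivAt
  rw [(hD.clm_apply hu).fderiv, fderiv_slice_eq_comp_inr hQ]
  simp only [add_apply, ContinuousLinearMap.comp_apply, ContinuousLinearMap.prod_apply, zero_apply,
    flip_apply, inr_apply, add_comm]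

theorem iteratedDeriv_two_comp_flow {η : E → E} {X : ℝ → E → E} {p : E}
    (hQ : ContDiff ℝ 2 (uncurry Q)) (hη : DifferentiableAt ℝ η p) (hX0 : X 0 p = p)
    (hXflow : ∀ t, HasDerivAt (fun s => X s p) (η (X t p)) t) :
    iteratedDeriv 2 (fun t => Q t (X t p)) 0
      = fderiv ℝ (fderiv ℝ (uncurry Q)) (0, p) (1, η p) (1, η p)
        + fderiv ℝ (Q 0) p (fderiv ℝ η p (η p)) := by
  have hQd : Differentiable ℝ (uncurry Q) := hQ.differentiable two_ne_zero
  have hQ'd : Differentiable ℝ (fderiv ℝ (uncurry Q)) :=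
    (hQ.fderiv_right (m := 1) le_rfl).differentiable one_ne_zero
  have hderiv : deriv (fun t => Q t (X t p))
      = fun t => fderiv ℝ (uncurry Q) (t, X t p) (1, η (X t p)) :=
    funext fun t => (hasDerivAt_uncurry_comp_graph (hQd _) (hXflow t)).deriv
  have hD : HasDerivAt (fun t => fderiv ℝ (uncurry Q) (t, X t p))
      (fderiv ℝ (fderiv ℝ (uncurry Q)) (0, X 0 p) (1, η (X 0 p))) 0 :=
    (hQ'd _).hasFDerivAt.comp_hasDerivAt 0 ((hasDerivAt_id 0).prodMk (hXflow 0))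
  have hη' : HasDerivAt (fun t => η (X t p)) (fderiv ℝ η (X 0 p) (η (X 0 p))) 0 :=
    (hX0 ▸ hη).hasFDerivAt.comp_hasDerivAt 0 (hXflow 0)
  rw [iteratedDeriv_succ, iteratedDeriv_one, hderiv,
    (hD.clm_apply ((hasDerivAt_const 0 1).prodMk hη')).deriv, fderiv_slice_eq_comp_inr (hQd _)]
  simp [hX0]

end SliceCalculus

theorem second_order_gauge_transformation_rule_general
    {E : Type*} [NormedAddCommGroup E] [NormedSpace ℝ E]
    (Q : ℝ → E → ℝ)
    (hQ : ContDiff ℝ (⊤ : ℕ∞) (fun q : ℝ × E => Q q.1 q.2))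
    (ηX ηY : E → E)
    (hηX : ContDiff ℝ (⊤ : ℕ∞) ηX) (hηY : ContDiff ℝ (⊤ : ℕ∞) ηY)
    (X Y : ℝ → E → E)
    (hX0 : ∀ p, X 0 p = p)
    (hXflow : ∀ (lam : ℝ) (p : E), HasDerivAt (fun t => X t p) (ηX (X lam p)) lam)
    (hY0 : ∀ p, Y 0 p = p)
    (hYflow : ∀ (lam : ℝ) (p : E), HasDerivAt (fun t => Y t p) (ηY (Y lam p)) lam)
    (ξ₁ ξ₂ : E → E)
    (hξ₁ : ξ₁ = fun x => ηY x - ηX x)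
    (hξ₂ : ξ₂ = fun x => (fderiv ℝ ηY x) (ηX x) - (fderiv ℝ ηX x) (ηY x))
    (p : E) :
    iteratedDeriv 2 (fun lam : ℝ => Q lam (Y lam p)) 0
        - iteratedDeriv 2 (fun lam : ℝ => Q lam (X lam p)) 0
      = 2 * (fderiv ℝ (fun x => deriv (fun lam : ℝ => Q lam (X lam x)) 0) p) (ξ₁ p)
        + (fderiv ℝ (Q 0) p) (ξ₂ p)
        + (fderiv ℝ (fun x => (fderiv ℝ (Q 0) x) (ξ₁ x)) p) (ξ₁ p) := by
  subst hξ₁ hξ₂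
  have hQ2 : ContDiff ℝ 2 (uncurry Q) := hQ.of_le (by norm_cast)
  have hQd : Differentiable ℝ (uncurry Q) := hQ2.differentiable two_ne_zero
  have hQ'd : Differentiable ℝ (fderiv ℝ (uncurry Q)) :=
    (hQ2.fderiv_right (m := 1) le_rfl).differentiable one_ne_zero
  have hηXd : DifferentiableAt ℝ ηX p := hηX.differentiable (by simp) p
  have hηYd : DifferentiableAt ℝ ηY p := hηY.differentiable (by simp) p
  have hfirst : (fun x => deriv (fun lam => Q lam (X lam x)) 0)
      = fun x => fderiv ℝ (uncurry Q) (0, x) (1, ηX x) :=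
    funext fun x => by rw [(hasDerivAt_uncurry_comp_graph (hQd _) (hXflow 0 x)).deriv, hX0]
  have hslice : (fun x => fderiv ℝ (Q 0) x (ηY x - ηX x))
      = fun x => fderiv ℝ (uncurry Q) (0, x) (0, ηY x - ηX x) :=
    funext fun x => by simp [fderiv_slice_eq_comp_inr (hQd _)]
  have hsymm := hQ2.contDiffAt.isSymmSndFDerivAt (x := (0, p)) (by simp)
  have hsplit : ((1 : ℝ), ηY p) = (1, ηX p) + (0, ηY p - ηX p) := by simp
  simp only [hfirst, hslice]
  rw [iteratedDeriv_two_comp_flow hQ2 hηYd (hY0 p) (hYflow · p),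
    iteratedDeriv_two_comp_flow hQ2 hηXd (hX0 p) (hXflow · p),
    fderiv_fderiv_uncurry_slice_apply (hQd _) (hQ'd _) hηXd,
    fderiv_fderiv_uncurry_slice_apply (V := fun x => ηY x - ηX x) (hQd _) (hQ'd _) (hηYd.sub hηXd),
    fderiv_fun_sub hηYd hηXd, hsplit]
  simp only [map_add, map_sub, add_apply, sub_apply, hsymm.eq (1, ηX p)]
  ring

/-- Second-order gauge transformation rule. For a smooth perturbed scalar field
`Q : ℝ → E → ℝ` and two gauge choices given by smooth flows `X`, `Y` of smooth vector fields
`ηX`, `ηY`, with `ξ₁ = ηY − ηX` and `ξ₂ = [ηX, ηY]`,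
`⁽²⁾_Y Q − ⁽²⁾_X Q = 2 £_{ξ₁} ⁽¹⁾_X Q + (£_{ξ₂} + £_{ξ₁}²) Q₀`. -/
theorem second_order_gauge_transformation_rule
    {E : Type*} [NormedAddCommGroup E] [NormedSpace ℝ E] [CompleteSpace E]
    (Q : ℝ → E → ℝ)
    (hQ : ContDiff ℝ (⊤ : ℕ∞) (fun q : ℝ × E => Q q.1 q.2))
    (ηX ηY : E → E)
    (hηX : ContDiff ℝ (⊤ : ℕ∞) ηX) (hηY : ContDiff ℝ (⊤ : ℕ∞) ηY)
    (X Y : ℝ → E → E)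
    (hX0 : ∀ p, X 0 p = p)
    (hXflow : ∀ (lam : ℝ) (p : E), HasDerivAt (fun t => X t p) (ηX (X lam p)) lam)
    (hXsmooth : ContDiff ℝ (⊤ : ℕ∞) (fun q : ℝ × E => X q.1 q.2))
    (hY0 : ∀ p, Y 0 p = p)
    (hYflow : ∀ (lam : ℝ) (p : E), HasDerivAt (fun t => Y t p) (ηY (Y lam p)) lam)
    (hYsmooth : ContDiff ℝ (⊤ : ℕ∞) (fun q : ℝ × E => Y q.1 q.2))
    (ξ₁ ξ₂ : E → E)
    (hξ₁ : ξ₁ = fun x => ηY x - ηX x)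
    (hξ₂ : ξ₂ = fun x => (fderiv ℝ ηY x) (ηX x) - (fderiv ℝ ηX x) (ηY x))
    (p : E) :
    iteratedDeriv 2 (fun lam : ℝ => Q lam (Y lam p)) 0
        - iteratedDeriv 2 (fun lam : ℝ => Q lam (X lam p)) 0
      = 2 * (fderiv ℝ (fun x => deriv (fun lam : ℝ => Q lam (X lam x)) 0) p) (ξ₁ p)
        + (fderiv ℝ (Q 0) p) (ξ₂ p)
        + (fderiv ℝ (fun x => (fderiv ℝ (Q 0) x) (ξ₁ x)) p) (ξ₁ p) :=
  second_order_gauge_transformation_rule_general Q hQ ηX ηY hηX hηY X Y hX0 hXflow hY0 hYflow ξ₁ ξ₂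
    hξ₁ hξ₂ p
end

section
/- Let E be a real Banach space. Let Q⁰ : E → ℝ be twice continuously differentiable, let Q¹_X, Q¹_Y : E → ℝ be continuously differentiable, let Q²_X, Q²_Y : E → ℝ be functions, let X_X, X_Y : E → E be continuously differentiable vector fields, and let ξ₁, ξ₂ : E → E be vector fields with ξ₁ continuously differentiable. Assume the gauge transformation rules: Q¹_Y − Q¹_X = ξ₁·Q⁰, Q²_Y − Q²_X = 2 ξ₁·Q¹_X + ξ₂·Q⁰ + ξ₁·(ξ₁·Q⁰), and X_Y − X_X = ξ₁ (all pointwise). Define, in each gauge g ∈ {X,Y}, L̂_g := Q²_g − 2 X_g·Q¹_g + X_g·(X_g·Q⁰). Then L̂ transforms like a first-order perturbation with generator σ := ξ₂ + [ξ₁, X_X]: pointwise on E, L̂_Y − L̂_X = σ·Q⁰, where [ξ₁, X_X](x) = (fderiv ℝ X_X x)(ξ₁ x) − (fderiv ℝ ξ₁ x)(X_X x). -/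
/-! Substituting `X_Y = X_X + ξ₁` and `Q¹_Y = Q¹_X + ξ₁·Q⁰` and expanding by bilinearity of
`(V, f) ↦ V·f`, every term of `L̂_Y − L̂_X` cancels against the second-order rule except
`ξ₂·Q⁰ + ξ₁·(X_X·Q⁰) − X_X·(ξ₁·Q⁰)`, and the last two terms combine to `[ξ₁, X_X]·Q⁰` because the
second derivative of the `C²` function `Q⁰` is symmetric. -/

/-- Directional (Lie) derivative of a scalar function `f` along a vector field `V`:
`(V·f)(x) = (fderiv ℝ f x)(V x)`. -/
noncomputable def dirDeriv {E : Type*} [NormedAddCommGroup E] [NormedSpace ℝ E]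
    (V : E → E) (f : E → ℝ) : E → ℝ :=
  fun x => (fderiv ℝ f x) (V x)

/-- Lie bracket of vector fields on a Banach space:
`[V,W](x) = (fderiv ℝ W x)(V x) − (fderiv ℝ V x)(W x)`. -/
noncomputable def lieBracket {E : Type*} [NormedAddCommGroup E] [NormedSpace ℝ E]
    (V W : E → E) : E → E :=
  fun x => (fderiv ℝ W x) (V x) - (fderiv ℝ V x) (W x)

section DirDeriv

variable {E : Type*} [NormedAddCommGroup E] [NormedSpace ℝ E]

theorem dirDeriv_add_left (V W : E → E) (f : E → ℝ) :
    dirDeriv (fun y => V y + W y) f = fun y => dirDeriv V f y + dirDeriv W f y :=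
  funext fun y => map_add (fderiv ℝ f y) (V y) (W y)

theorem dirDeriv_add_right (V : E → E) {f g : E → ℝ} {x : E}
    (hf : DifferentiableAt ℝ f x) (hg : DifferentiableAt ℝ g x) :
    dirDeriv V (fun y => f y + g y) x = dirDeriv V f x + dirDeriv V g x :=
  congrArg (fun L => L (V x)) (fderiv_fun_add hf hg)

theorem differentiableAt_dirDeriv {V : E → E} {f : E → ℝ} {x : E}
    (hf : ContDiffAt ℝ 2 f x) (hV : DifferentiableAt ℝ V x) :
    DifferentiableAt ℝ (dirDeriv V f) x :=
  ((hf.fderiv_right (m := 1) le_rfl).differentiableAt one_ne_zero).clm_apply hV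

theorem dirDeriv_lieBracket {V W : E → E} {f : E → ℝ} {x : E}
    (hf : ContDiffAt ℝ 2 f x) (hV : DifferentiableAt ℝ V x) (hW : DifferentiableAt ℝ W x) :
    dirDeriv (lieBracket V W) f x = dirDeriv V (dirDeriv W f) x - dirDeriv W (dirDeriv V f) x :=
  VectorField.fderiv_apply_lieBracket hf (by simp) hW hV

end DirDeriv

theorem Lhat_transforms_like_first_order_general
    {E : Type*} [NormedAddCommGroup E] [NormedSpace ℝ E]
    (Q0 : E → ℝ) (hQ0 : ContDiff ℝ 2 Q0)
    (Q1X Q1Y : E → ℝ) (hQ1X : ContDiff ℝ 1 Q1X)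
    (Q2X Q2Y : E → ℝ)
    (XX XY : E → E) (hXX : ContDiff ℝ 1 XX)
    (ξ₁ ξ₂ : E → E) (hξ₁ : ContDiff ℝ 1 ξ₁)
    (hQ1rule : ∀ x, Q1Y x - Q1X x = dirDeriv ξ₁ Q0 x)
    (hQ2rule : ∀ x, Q2Y x - Q2X x
      = 2 * dirDeriv ξ₁ Q1X x + dirDeriv ξ₂ Q0 x + dirDeriv ξ₁ (dirDeriv ξ₁ Q0) x)
    (hXrule : ∀ x, XY x - XX x = ξ₁ x) :
    ∀ x, (Q2Y x - 2 * dirDeriv XY Q1Y x + dirDeriv XY (dirDeriv XY Q0) x)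
        - (Q2X x - 2 * dirDeriv XX Q1X x + dirDeriv XX (dirDeriv XX Q0) x)
      = dirDeriv (fun y => ξ₂ y + lieBracket ξ₁ XX y) Q0 x := by
  intro x
  obtain rfl : XY = fun y => XX y + ξ₁ y := funext fun y => eq_add_of_sub_eq' (hXrule y)
  obtain rfl : Q1Y = fun y => Q1X y + dirDeriv ξ₁ Q0 y :=
    funext fun y => eq_add_of_sub_eq' (hQ1rule y)
  have hQ0x : ContDiffAt ℝ 2 Q0 x := hQ0.contDiffAt
  have hXXx : DifferentiableAt ℝ XX x := hXX.differentiable one_ne_zero x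
  have hξ₁x : DifferentiableAt ℝ ξ₁ x := hξ₁.differentiable one_ne_zero x
  have hQ1Xx : DifferentiableAt ℝ Q1X x := hQ1X.differentiable one_ne_zero x
  have hξ₁Q0 := differentiableAt_dirDeriv hQ0x hξ₁x
  have hXXQ0 := differentiableAt_dirDeriv hQ0x hXXx
  have hbracket := dirDeriv_lieBracket hQ0x hξ₁x hXXx
  simp only [dirDeriv_add_left]
  rw [dirDeriv_add_right _ hQ1Xx hξ₁Q0, dirDeriv_add_right _ hQ1Xx hξ₁Q0,
    dirDeriv_add_right _ hXXQ0 hξ₁Q0, dirDeriv_add_right _ hXXQ0 hξ₁Q0, hbracket]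
  linarith [hQ2rule x]

/-- The variable `L̂_g := Q²_g − 2 X_g·Q¹_g + X_g·(X_g·Q⁰)` transforms like a
first-order perturbation with generator `σ = ξ₂ + [ξ₁, X_X]`:
`L̂_Y − L̂_X = σ·Q⁰` pointwise, given the first- and second-order gauge transformation rules. -/
theorem Lhat_transforms_like_first_order
    {E : Type*} [NormedAddCommGroup E] [NormedSpace ℝ E] [CompleteSpace E]
    (Q0 : E → ℝ) (hQ0 : ContDiff ℝ 2 Q0)
    (Q1X Q1Y : E → ℝ) (hQ1X : ContDiff ℝ 1 Q1X) (hQ1Y : ContDiff ℝ 1 Q1Y)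
    (Q2X Q2Y : E → ℝ)
    (XX XY : E → E) (hXX : ContDiff ℝ 1 XX) (hXY : ContDiff ℝ 1 XY)
    (ξ₁ ξ₂ : E → E) (hξ₁ : ContDiff ℝ 1 ξ₁)
    (hQ1rule : ∀ x, Q1Y x - Q1X x = dirDeriv ξ₁ Q0 x)
    (hQ2rule : ∀ x, Q2Y x - Q2X x
      = 2 * dirDeriv ξ₁ Q1X x + dirDeriv ξ₂ Q0 x + dirDeriv ξ₁ (dirDeriv ξ₁ Q0) x)
    (hXrule : ∀ x, XY x - XX x = ξ₁ x) :
    ∀ x, (Q2Y x - 2 * dirDeriv XY Q1Y x + dirDeriv XY (dirDeriv XY Q0) x)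
        - (Q2X x - 2 * dirDeriv XX Q1X x + dirDeriv XX (dirDeriv XX Q0) x)
      = dirDeriv (fun y => ξ₂ y + lieBracket ξ₁ XX y) Q0 x :=
  Lhat_transforms_like_first_order_general Q0 hQ0 Q1X Q1Y hQ1X Q2X Q2Y XX XY hXX ξ₁ ξ₂ hξ₁ hQ1rule
    hQ2rule hXrule
end

section
/- Let E be a real Banach space and let Φ : ℝ → E → E be a one-parameter family of maps with Φ 0 = id and (λ,p) ↦ Φ λ p infinitely differentiable. Define the first-order generator ξ₁ : E → E by ξ₁ p := d/dλ|_{λ=0} Φ λ p, and define the operator L₂ on twice continuously differentiable functions h : E → ℝ by (L₂ h)(p) := d²/dλ²|_{λ=0} h(Φ λ p) − (ξ₁·(ξ₁·h))(p). Then L₂ is ℝ-linear and satisfies the Leibniz rule: for all infinitely differentiable f, g : E → ℝ and all p ∈ E, L₂(f·g)(p) = f(p)·(L₂ g)(p) + g(p)·(L₂ f)(p). (This is the statement that the second-order Taylor coefficient of the pull-back, after subtracting ξ₁², is a derivation; equivalently, the coefficient a in the decomposition of the second-order term must equal 1.) -/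
/-- First-order generator `ξ₁ p = d/dλ|₀ Φ λ p` of a one-parameter family of
diffeomorphisms `Φ`. -/
noncomputable def gen1 {E : Type*} [NormedAddCommGroup E] [NormedSpace ℝ E]
    (Φ : ℝ → E → E) : E → E :=
  fun p => deriv (fun lam : ℝ => Φ lam p) 0

/-- The operator `L₂` on twice continuously differentiable scalar functions:
`(L₂ h)(p) = d²/dλ²|₀ h (Φ λ p) − (ξ₁·(ξ₁·h))(p)`, the second-order Taylor coefficient of the
pull-back of `Φ` after subtracting `ξ₁²`. -/
noncomputable def L2 {E : Type*} [NormedAddCommGroup E] [NormedSpace ℝ E]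
    (Φ : ℝ → E → E) (h : E → ℝ) : E → ℝ :=
  fun p => iteratedDeriv 2 (fun lam : ℝ => h (Φ lam p)) 0
    - dirDeriv (gen1 Φ) (dirDeriv (gen1 Φ) h) p

section DirDeriv

variable {E : Type*} [NormedAddCommGroup E] [NormedSpace ℝ E] {V : E → E} {f g : E → ℝ} {p : E}

lemma dirDeriv_add (hf : DifferentiableAt ℝ f p) (hg : DifferentiableAt ℝ g p) :
    dirDeriv V (fun x => f x + g x) p = dirDeriv V f p + dirDeriv V g p := by
  simp [dirDeriv, fderiv_fun_add hf hg]

lemma dirDeriv_const_mul (c : ℝ) (hf : DifferentiableAt ℝ f p) :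
    dirDeriv V (fun x => c * f x) p = c * dirDeriv V f p := by
  simp [dirDeriv, fderiv_const_mul hf c]

lemma dirDeriv_mul (hf : DifferentiableAt ℝ f p) (hg : DifferentiableAt ℝ g p) :
    dirDeriv V (fun x => f x * g x) p = f p * dirDeriv V g p + g p * dirDeriv V f p := by
  simp [dirDeriv, fderiv_fun_mul hf hg]

lemma contDiff_dirDeriv {n : WithTop ℕ∞} (hV : ContDiff ℝ n V) (hf : ContDiff ℝ (n + 1) f) :
    ContDiff ℝ n (dirDeriv V f) :=
  (hf.fderiv_right le_rfl).clm_apply hV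

lemma dirDeriv_dirDeriv_const_mul_add (c : ℝ) (hf : Differentiable ℝ f)
    (hg : Differentiable ℝ g) (hVf : DifferentiableAt ℝ (dirDeriv V f) p)
    (hVg : DifferentiableAt ℝ (dirDeriv V g) p) :
    dirDeriv V (dirDeriv V (fun x => c * f x + g x)) p
      = c * dirDeriv V (dirDeriv V f) p + dirDeriv V (dirDeriv V g) p := by
  have first : dirDeriv V (fun x => c * f x + g x)
      = fun x => c * dirDeriv V f x + dirDeriv V g x := by
    funext x
    rw [dirDeriv_add ((hf x).const_mul c) (hg x), dirDeriv_const_mul c (hf x)]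
  rw [first, dirDeriv_add (hVf.const_mul c) hVg, dirDeriv_const_mul c hVf]

lemma dirDeriv_dirDeriv_mul (hf : Differentiable ℝ f) (hg : Differentiable ℝ g)
    (hVf : DifferentiableAt ℝ (dirDeriv V f) p) (hVg : DifferentiableAt ℝ (dirDeriv V g) p) :
    dirDeriv V (dirDeriv V (fun x => f x * g x)) p
      = f p * dirDeriv V (dirDeriv V g) p + 2 * dirDeriv V f p * dirDeriv V g p
        + g p * dirDeriv V (dirDeriv V f) p := by
  have first : dirDeriv V (fun x => f x * g x)
      = fun x => f x * dirDeriv V g x + g x * dirDeriv V f x :=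
    funext fun x => dirDeriv_mul (hf x) (hg x)
  rw [first, dirDeriv_add ((hf p).fun_mul hVg) ((hg p).fun_mul hVf), dirDeriv_mul (hf p) hVg,
    dirDeriv_mul (hg p) hVf]
  ring

end DirDeriv

lemma iteratedDeriv_two_mul {u v : ℝ → ℝ} {t : ℝ} (hu : ContDiffAt ℝ 2 u t)
    (hv : ContDiffAt ℝ 2 v t) :
    iteratedDeriv 2 (fun s => u s * v s) t
      = u t * iteratedDeriv 2 v t + 2 * deriv u t * deriv v t + v t * iteratedDeriv 2 u t := by
  rw [iteratedDeriv_fun_mul hu hv]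
  simp only [Nat.reduceAdd, Finset.sum_range_succ, Finset.range_one, Finset.sum_singleton,
    Nat.choose_zero_right, Nat.choose_succ_self_right, Nat.choose_self, Nat.cast_one, Nat.cast_ofNat,
    tsub_zero, Nat.add_one_sub_one, tsub_self, iteratedDeriv_zero, iteratedDeriv_one]
  ring

section Curves

variable {E : Type*} [NormedAddCommGroup E] [NormedSpace ℝ E] {Φ : ℝ → E → E} {n : WithTop ℕ∞}

lemma contDiff_orbit (hΦ : ContDiff ℝ n (fun q : ℝ × E => Φ q.1 q.2)) (p : E) :
    ContDiff ℝ n (fun lam : ℝ => Φ lam p) :=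
  hΦ.comp (contDiff_id.prodMk contDiff_const)

lemma contDiff_gen1 (hΦ : ContDiff ℝ (n + 1) (fun q : ℝ × E => Φ q.1 q.2)) :
    ContDiff ℝ n (gen1 Φ) :=
  ContDiff.fderiv_apply (f := fun p lam => Φ lam p) (hΦ.comp (contDiff_snd.prodMk contDiff_fst))
    contDiff_const contDiff_const le_rfl

lemma deriv_comp_orbit_zero (hΦ0 : Φ 0 = id) {h : E → ℝ} {p : E}
    (hΦp : DifferentiableAt ℝ (fun lam : ℝ => Φ lam p) 0) (hh : DifferentiableAt ℝ h p) :
    deriv (fun lam : ℝ => h (Φ lam p)) 0 = dirDeriv (gen1 Φ) h p := by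
  have hh' : DifferentiableAt ℝ h (Φ 0 p) := by rwa [hΦ0]
  rw [← Function.comp_def, fderiv_comp_deriv 0 hh' hΦp, hΦ0]
  rfl

end Curves

section L2

variable {E : Type*} [NormedAddCommGroup E] [NormedSpace ℝ E] {Φ : ℝ → E → E}
  {f g : E → ℝ}

lemma L2_const_mul_add (hΦ : ContDiff ℝ 2 (fun q : ℝ × E => Φ q.1 q.2)) (hf : ContDiff ℝ 2 f)
    (hg : ContDiff ℝ 2 g) (c : ℝ) (p : E) :
    L2 Φ (fun x => c * f x + g x) p = c * L2 Φ f p + L2 Φ g p := by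
  have hu : ContDiffAt ℝ 2 (fun lam => f (Φ lam p)) 0 :=
    (hf.comp (contDiff_orbit hΦ p)).contDiffAt
  have hv : ContDiffAt ℝ 2 (fun lam => g (Φ lam p)) 0 :=
    (hg.comp (contDiff_orbit hΦ p)).contDiffAt
  have hV : ContDiff ℝ 1 (gen1 Φ) := contDiff_gen1 hΦ
  have hVf := (contDiff_dirDeriv hV hf).differentiable one_ne_zero p
  have hVg := (contDiff_dirDeriv hV hg).differentiable one_ne_zero p
  simp only [L2]
  rw [iteratedDeriv_fun_add (contDiffAt_const.mul hu) hv, iteratedDeriv_const_mul_field,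
    dirDeriv_dirDeriv_const_mul_add c (hf.differentiable two_ne_zero)
      (hg.differentiable two_ne_zero) hVf hVg]
  ring

lemma L2_mul (hΦ0 : Φ 0 = id) (hΦ : ContDiff ℝ 2 (fun q : ℝ × E => Φ q.1 q.2))
    (hf : ContDiff ℝ 2 f) (hg : ContDiff ℝ 2 g) (p : E) :
    L2 Φ (fun x => f x * g x) p = f p * L2 Φ g p + g p * L2 Φ f p := by
  have hu : ContDiffAt ℝ 2 (fun lam => f (Φ lam p)) 0 :=
    (hf.comp (contDiff_orbit hΦ p)).contDiffAt
  have hv : ContDiffAt ℝ 2 (fun lam => g (Φ lam p)) 0 :=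
    (hg.comp (contDiff_orbit hΦ p)).contDiffAt
  have hV : ContDiff ℝ 1 (gen1 Φ) := contDiff_gen1 hΦ
  have hVf := (contDiff_dirDeriv hV hf).differentiable one_ne_zero p
  have hVg := (contDiff_dirDeriv hV hg).differentiable one_ne_zero p
  have hΦp := (contDiff_orbit hΦ p).differentiable two_ne_zero 0
  simp only [L2]
  rw [iteratedDeriv_two_mul hu hv,
    dirDeriv_dirDeriv_mul (hf.differentiable two_ne_zero) (hg.differentiable two_ne_zero) hVf hVg,
    deriv_comp_orbit_zero hΦ0 hΦp (hf.differentiable two_ne_zero p),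
    deriv_comp_orbit_zero hΦ0 hΦp (hg.differentiable two_ne_zero p)]
  simp only [hΦ0, id_eq]
  ring

end L2

theorem L2_linear_and_leibniz_general
    {E : Type*} [NormedAddCommGroup E] [NormedSpace ℝ E]
    (Φ : ℝ → E → E) (hΦ0 : Φ 0 = id)
    (hΦ : ContDiff ℝ (⊤ : ℕ∞) (fun q : ℝ × E => Φ q.1 q.2)) :
    (∀ (c : ℝ) (f g : E → ℝ), ContDiff ℝ (⊤ : ℕ∞) f → ContDiff ℝ (⊤ : ℕ∞) g →
      ∀ p, L2 Φ (fun x => c * f x + g x) p = c * L2 Φ f p + L2 Φ g p) ∧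
    (∀ (f g : E → ℝ), ContDiff ℝ (⊤ : ℕ∞) f → ContDiff ℝ (⊤ : ℕ∞) g →
      ∀ p, L2 Φ (fun x => f x * g x) p = f p * L2 Φ g p + g p * L2 Φ f p) := by
  have two_le : (2 : WithTop ℕ∞) ≤ (⊤ : ℕ∞) := WithTop.coe_le_coe.mpr le_top
  exact ⟨fun c f g hf hg p =>
      L2_const_mul_add (hΦ.of_le two_le) (hf.of_le two_le) (hg.of_le two_le) c p,
    fun f g hf hg p => L2_mul hΦ0 (hΦ.of_le two_le) (hf.of_le two_le) (hg.of_le two_le) p⟩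

/-- For a general one-parameter family of diffeomorphisms `Φ` with `Φ 0 = id`,
the operator `L₂` is ℝ-linear and satisfies the Leibniz rule on infinitely differentiable
functions; hence it is a derivation (the coefficient `a` in the decomposition of the
second-order Taylor term must equal 1). -/
theorem L2_linear_and_leibniz
    {E : Type*} [NormedAddCommGroup E] [NormedSpace ℝ E] [CompleteSpace E]
    (Φ : ℝ → E → E) (hΦ0 : Φ 0 = id)
    (hΦ : ContDiff ℝ (⊤ : ℕ∞) (fun q : ℝ × E => Φ q.1 q.2)) :
    (∀ (c : ℝ) (f g : E → ℝ), ContDiff ℝ (⊤ : ℕ∞) f → ContDiff ℝ (⊤ : ℕ∞) g →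
      ∀ p, L2 Φ (fun x => c * f x + g x) p = c * L2 Φ f p + L2 Φ g p) ∧
    (∀ (f g : E → ℝ), ContDiff ℝ (⊤ : ℕ∞) f → ContDiff ℝ (⊤ : ℕ∞) g →
      ∀ p, L2 Φ (fun x => f x * g x) p = f p * L2 Φ g p + g p * L2 Φ f p) :=
  L2_linear_and_leibniz_general Φ hΦ0 hΦ
end

section
/- Let E be a real Banach space and let Φ : ℝ → E → E be a one-parameter family of maps with Φ 0 = id and (λ,p) ↦ Φ λ p infinitely differentiable. Then there exist vector fields ξ₁, ξ₂ : E → E (namely ξ₁ p = d/dλ|₀ Φ λ p and ξ₂ p = d²/dλ²|₀ Φ λ p − (fderiv ℝ ξ₁ p)(ξ₁ p)) such that for every twice continuously differentiable f : E → ℝ and every p ∈ E: d/dλ|_{λ=0} f(Φ λ p) = (ξ₁·f)(p) and d²/dλ²|_{λ=0} f(Φ λ p) = (ξ₂·f)(p) + (ξ₁·(ξ₁·f))(p); consequently, as λ → 0, f(Φ λ p) = f(p) + λ (ξ₁·f)(p) + (λ²/2) ((ξ₂·f)(p) + (ξ₁·(ξ₁·f))(p)) + o(λ²). (Sonego–Bruni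 representation of the Taylor expansion of a pull-back in terms of first- and second-order generators.) -/
open Asymptotics
open scoped Topology

/-!
Along the curve `λ ↦ Φ λ p`, which passes through `p` at `λ = 0` with velocity `ξ₁ p` and
acceleration `Φ̈ p`, the chain rule gives `(f ∘ Φ · p)' (0) = f'(p) ξ₁` and
`(f ∘ Φ · p)'' (0) = f''(p)(ξ₁, ξ₁) + f'(p) Φ̈`. By the Leibniz rule,
`ξ₁·(ξ₁·f) = f''(ξ₁, ξ₁) + f'(Dξ₁ ξ₁)`, and the extra term `f'(Dξ₁ ξ₁)` is exactly what the
definition of `ξ₂` subtracts from `f'(p) Φ̈`. Taylor's theorem at order two then gives the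
expansion.
-/

section

variable {E F : Type*} [NormedAddCommGroup E] [NormedSpace ℝ E]
  [NormedAddCommGroup F] [NormedSpace ℝ F]

theorem taylor_two_isLittleO {g : ℝ → F} (hg : ContDiff ℝ 2 g) (x₀ : ℝ) :
    (fun x => g x - (g x₀ + (x - x₀) • deriv g x₀ + ((x - x₀) ^ 2 / 2) • iteratedDeriv 2 g x₀))
      =o[𝓝 x₀] fun x => (x - x₀) ^ 2 := by
  convert taylor_isLittleO_univ (x₀ := x₀) (n := 2) (by exact_mod_cast hg) using 3 with x
  norm_num [iteratedDerivWithin_univ, iteratedDeriv_one, div_eq_inv_mul]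

theorem deriv_comp_curve {f : E → F} {c : ℝ → E} (hf : Differentiable ℝ f)
    (hc : Differentiable ℝ c) :
    deriv (fun t => f (c t)) = fun t => fderiv ℝ f (c t) (deriv c t) :=
  funext fun t => fderiv_comp_deriv t (hf (c t)) (hc t)

theorem iteratedDeriv_two_comp_curve {f : E → F} {c : ℝ → E} (hf : ContDiff ℝ 2 f)
    (hc : ContDiff ℝ 2 c) (t : ℝ) :
    iteratedDeriv 2 (fun t => f (c t)) t
      = fderiv ℝ (fderiv ℝ f) (c t) (deriv c t) (deriv c t)
        + fderiv ℝ f (c t) (iteratedDeriv 2 c t) := by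
  have hDf : Differentiable ℝ (fderiv ℝ f) := (hf.fderiv_right le_rfl).differentiable one_ne_zero
  have hDc : Differentiable ℝ (deriv c) := (hc.deriv' (n := 1)).differentiable one_ne_zero
  rw [iteratedDeriv_succ, iteratedDeriv_one, iteratedDeriv_succ, iteratedDeriv_one,
    deriv_comp_curve (hf.differentiable two_ne_zero) (hc.differentiable two_ne_zero)]
  exact (((hDf (c t)).hasFDerivAt.comp_hasDerivAt t
    ((hc.differentiable two_ne_zero) t).hasDerivAt).clm_apply (hDc t).hasDerivAt).deriv

theorem contDiff_deriv_param {Φ : ℝ → E → F} {n : WithTop ℕ∞}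
    (hΦ : ContDiff ℝ (n + 1) fun q : ℝ × E => Φ q.1 q.2) (t₀ : ℝ) :
    ContDiff ℝ n fun p => deriv (fun t => Φ t p) t₀ :=
  ((hΦ.comp (contDiff_snd.prodMk contDiff_fst)).fderiv_succ (f := fun p t => Φ t p)
    contDiff_const).clm_apply contDiff_const

theorem dirDeriv_dirDeriv {V W : E → E} {f : E → ℝ} {x : E}
    (hf : DifferentiableAt ℝ (fderiv ℝ f) x)
    (hV : DifferentiableAt ℝ V x) :
    dirDeriv W (dirDeriv V f) x
      = fderiv ℝ (fderiv ℝ f) x (W x) (V x) + fderiv ℝ f x (fderiv ℝ V x (W x)) := by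
  change fderiv ℝ (fun y => fderiv ℝ f y (V y)) x (W x) = _
  rw [fderiv_clm_apply hf hV]
  simp [add_comm]

end

theorem sonego_bruni_taylor_representation_general
    {E : Type*} [NormedAddCommGroup E] [NormedSpace ℝ E]
    (Φ : ℝ → E → E) (hΦ0 : Φ 0 = id)
    (hΦ : ContDiff ℝ (⊤ : ℕ∞) (fun q : ℝ × E => Φ q.1 q.2)) :
    ∃ ξ₁ ξ₂ : E → E,
      (∀ p, ξ₁ p = deriv (fun lam : ℝ => Φ lam p) 0) ∧
      (∀ p, ξ₂ p = iteratedDeriv 2 (fun lam : ℝ => Φ lam p) 0 - (fderiv ℝ ξ₁ p) (ξ₁ p)) ∧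
      ∀ (f : E → ℝ), ContDiff ℝ 2 f → ∀ p : E,
        deriv (fun lam : ℝ => f (Φ lam p)) 0 = dirDeriv ξ₁ f p ∧
        iteratedDeriv 2 (fun lam : ℝ => f (Φ lam p)) 0
          = dirDeriv ξ₂ f p + dirDeriv ξ₁ (dirDeriv ξ₁ f) p ∧
        (fun lam : ℝ => f (Φ lam p)
            - (f p + lam * dirDeriv ξ₁ f p
              + lam ^ 2 / 2 * (dirDeriv ξ₂ f p + dirDeriv ξ₁ (dirDeriv ξ₁ f) p)))
          =o[𝓝 0] fun lam : ℝ => lam ^ 2 := by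
  have hΦ2 : ContDiff ℝ 2 fun q : ℝ × E => Φ q.1 q.2 := hΦ.of_le (WithTop.coe_le_coe.mpr le_top)
  have hcurve : ∀ p, ContDiff ℝ 2 fun lam => Φ lam p := fun p =>
    hΦ2.comp (contDiff_id.prodMk contDiff_const)
  have hcurve_zero : ∀ p, Φ 0 p = p := fun p => by rw [hΦ0, id]
  set ξ₁ : E → E := fun p => deriv (fun lam => Φ lam p) 0
  have hξ₁ : Differentiable ℝ ξ₁ := (contDiff_deriv_param hΦ2 0).differentiable one_ne_zero
  set ξ₂ : E → E := fun p => iteratedDeriv 2 (fun lam => Φ lam p) 0 - fderiv ℝ ξ₁ p (ξ₁ p)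
  refine ⟨ξ₁, ξ₂, fun _ => rfl, fun _ => rfl, fun f hf p => ?_⟩
  have hfirst : deriv (fun lam => f (Φ lam p)) 0 = dirDeriv ξ₁ f p := by
    rw [deriv_comp_curve (hf.differentiable two_ne_zero) ((hcurve p).differentiable two_ne_zero)]
    simp only [hcurve_zero]
    rfl
  have hsecond : iteratedDeriv 2 (fun lam => f (Φ lam p)) 0
      = dirDeriv ξ₂ f p + dirDeriv ξ₁ (dirDeriv ξ₁ f) p := by
    rw [iteratedDeriv_two_comp_curve hf (hcurve p), hcurve_zero, dirDeriv_dirDeriv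
      ((hf.fderiv_right le_rfl).differentiable one_ne_zero p) (hξ₁ p), dirDeriv, map_sub]
    abel
  refine ⟨hfirst, hsecond, ?_⟩
  simpa [hfirst, hsecond, hcurve_zero] using
    taylor_two_isLittleO (g := fun lam => f (Φ lam p)) (hf.comp (hcurve p)) 0

/-- Sonego–Bruni representation: for a general one-parameter family of
diffeomorphisms `Φ` with `Φ 0 = id`, there exist vector fields `ξ₁` (the first λ-derivative
of `Φ`) and `ξ₂` (the second λ-derivative minus `(fderiv ξ₁)(ξ₁)`) such that for every C²
scalar function `f` and every point `p`,
`d/dλ|₀ f (Φ λ p) = (ξ₁·f)(p)`,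
`d²/dλ²|₀ f (Φ λ p) = (ξ₂·f)(p) + (ξ₁·(ξ₁·f))(p)`, and
`f (Φ λ p) = f p + λ (ξ₁·f)(p) + (λ²/2)((ξ₂·f)(p) + (ξ₁·(ξ₁·f))(p)) + o(λ²)` as `λ → 0`. -/
theorem sonego_bruni_taylor_representation
    {E : Type*} [NormedAddCommGroup E] [NormedSpace ℝ E] [CompleteSpace E]
    (Φ : ℝ → E → E) (hΦ0 : Φ 0 = id)
    (hΦ : ContDiff ℝ (⊤ : ℕ∞) (fun q : ℝ × E => Φ q.1 q.2)) :
    ∃ ξ₁ ξ₂ : E → E,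
      (∀ p, ξ₁ p = deriv (fun lam : ℝ => Φ lam p) 0) ∧
      (∀ p, ξ₂ p = iteratedDeriv 2 (fun lam : ℝ => Φ lam p) 0 - (fderiv ℝ ξ₁ p) (ξ₁ p)) ∧
      ∀ (f : E → ℝ), ContDiff ℝ 2 f → ∀ p : E,
        deriv (fun lam : ℝ => f (Φ lam p)) 0 = dirDeriv ξ₁ f p ∧
        iteratedDeriv 2 (fun lam : ℝ => f (Φ lam p)) 0
          = dirDeriv ξ₂ f p + dirDeriv ξ₁ (dirDeriv ξ₁ f) p ∧
        (fun lam : ℝ => f (Φ lam p)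
            - (f p + lam * dirDeriv ξ₁ f p
              + lam ^ 2 / 2 * (dirDeriv ξ₂ f p + dirDeriv ξ₁ (dirDeriv ξ₁ f) p)))
          =o[𝓝 0] fun lam : ℝ => lam ^ 2 :=
  sonego_bruni_taylor_representation_general Φ hΦ0 hΦ
end

section
/- Work on a spatially flat (K = 0) Friedmann background. Let G be a real constant, a : ℝ → ℝ a smooth positive function, φ : ℝ → ℝ smooth with φ′(η) ≠ 0 for all η, V : ℝ → ℝ smooth, and set ℋ := a′/a. Let Φ, φ₁ : ℝ × ℝ³ → ℝ be smooth functions of (η, x) (the gauge-invariant scalar metric perturbation and the gauge-invariant first-order scalar field perturbation), and let Δ denote the spatial Laplacian Δf = Σᵢ ∂²f/∂xᵢ². Assume that for all (η, x) the three first-order Einstein equations hold: (i) ΔΦ − 3ℋ ∂_ηΦ − (ℋ′ + 2ℋ²) Φ = 4πG ( ∂_ηφ₁ · φ′ + a² V′(φ) φ₁ ); (ii) ∂_ηΦ + ℋ Φ = 4πG φ₁ φ′; (iii) ∂_η²Φ + 3ℋ ∂_ηΦ + (ℋ′ + 2ℋ²) Φ = 4πG ( ∂_ηφ₁ · φ′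 − a² V′(φ) φ₁ ). Then Φ satisfies the master equation of first-order scalar cosmological perturbations: for all (η, x), ∂_η²Φ + 2 ( ℋ − φ″/φ′ ) ∂_ηΦ − ΔΦ + 2 ( ℋ′ − ℋ φ″/φ′ ) Φ = 0. -/
/-- Conformal-time derivative `∂_η f` of a function of `(η, x) ∈ ℝ × ℝ³`. -/
noncomputable def dEta (f : ℝ × (Fin 3 → ℝ) → ℝ) : ℝ × (Fin 3 → ℝ) → ℝ :=
  fun q => (fderiv ℝ f q) (1, 0)

/-- Spatial partial derivative `∂f/∂xᵢ` of a function of `(η, x) ∈ ℝ × ℝ³`. -/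
noncomputable def dX (i : Fin 3) (f : ℝ × (Fin 3 → ℝ) → ℝ) : ℝ × (Fin 3 → ℝ) → ℝ :=
  fun q => (fderiv ℝ f q) (0, Pi.single i 1)

/-- Spatial (flat) Laplacian `Δf = Σᵢ ∂²f/∂xᵢ²` of a function of `(η, x) ∈ ℝ × ℝ³`. -/
noncomputable def lap (f : ℝ × (Fin 3 → ℝ) → ℝ) : ℝ × (Fin 3 → ℝ) → ℝ :=
  fun q => ∑ i : Fin 3, dX i (dX i f) q

/-! Adding the Einstein equations (i) and (iii) eliminates the potential:
`∂_η²Φ + ΔΦ = 8πG ∂_ηφ₁ φ′`. Differentiating the momentum constraint (ii) in `η` gives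
`∂_η²Φ + ℋ∂_ηΦ + ℋ′Φ = 4πG (∂_ηφ₁ φ′ + φ₁ φ″)`. Twice the latter minus the former leaves
`8πG φ₁ φ″` on the right, which (ii) divided by `φ′` rewrites as `2 (φ″/φ′)(∂_ηΦ + ℋΦ)`. -/

section dEta

variable {f g : ℝ × (Fin 3 → ℝ) → ℝ} {q : ℝ × (Fin 3 → ℝ)}

lemma dEta_add (hf : DifferentiableAt ℝ f q) (hg : DifferentiableAt ℝ g q) :
    dEta (fun p => f p + g p) q = dEta f q + dEta g q := by
  simp only [dEta, fderiv_fun_add hf hg, add_apply]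

lemma dEta_mul (hf : DifferentiableAt ℝ f q) (hg : DifferentiableAt ℝ g q) :
    dEta (fun p => f p * g p) q = dEta f q * g q + f q * dEta g q := by
  simp only [dEta, fderiv_fun_mul hf hg, add_apply, smul_apply, smul_eq_mul]
  ring

lemma dEta_const_mul (hf : DifferentiableAt ℝ f q) (c : ℝ) :
    dEta (fun p => c * f p) q = c * dEta f q := by
  simp only [dEta, fderiv_const_mul hf, smul_apply, smul_eq_mul]

lemma dEta_comp_fst {h : ℝ → ℝ} (hh : DifferentiableAt ℝ h q.1) :
    dEta (fun p => h p.1) q = deriv h q.1 := by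
  have := hh.hasDerivAt.comp_hasFDerivAt q (hasFDerivAt_fst (𝕜 := ℝ) (p := q))
  simp [dEta, ← Function.comp_def h Prod.fst, this.fderiv]

lemma differentiable_dEta (hf : ContDiff ℝ 2 f) : Differentiable ℝ (dEta f) :=
  ((hf.fderiv_right (m := 1) (by norm_num)).clm_apply contDiff_const).differentiable one_ne_zero

end dEta

theorem first_order_master_equation_general
    (G : ℝ)
    (a φ : ℝ → ℝ) (ha : ContDiff ℝ (⊤ : ℕ∞) a) (hapos : ∀ η, 0 < a η)
    (hφ : ContDiff ℝ (⊤ : ℕ∞) φ) (hφ' : ∀ η : ℝ, deriv φ η ≠ 0)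
    (V : ℝ → ℝ)
    (Φ φ₁ : ℝ × (Fin 3 → ℝ) → ℝ)
    (hΦ : ContDiff ℝ (⊤ : ℕ∞) Φ) (hφ₁ : ContDiff ℝ (⊤ : ℕ∞) φ₁)
    (hEin1 : ∀ q : ℝ × (Fin 3 → ℝ),
      lap Φ q - 3 * (deriv a q.1 / a q.1) * dEta Φ q
          - (deriv (fun t => deriv a t / a t) q.1 + 2 * (deriv a q.1 / a q.1) ^ 2) * Φ q
        = 4 * Real.pi * G
            * (dEta φ₁ q * deriv φ q.1 + (a q.1) ^ 2 * deriv V (φ q.1) * φ₁ q))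
    (hEin2 : ∀ q : ℝ × (Fin 3 → ℝ),
      dEta Φ q + (deriv a q.1 / a q.1) * Φ q
        = 4 * Real.pi * G * (φ₁ q * deriv φ q.1))
    (hEin3 : ∀ q : ℝ × (Fin 3 → ℝ),
      dEta (dEta Φ) q + 3 * (deriv a q.1 / a q.1) * dEta Φ q
          + (deriv (fun t => deriv a t / a t) q.1 + 2 * (deriv a q.1 / a q.1) ^ 2) * Φ q
        = 4 * Real.pi * G
            * (dEta φ₁ q * deriv φ q.1 - (a q.1) ^ 2 * deriv V (φ q.1) * φ₁ q)) :
    ∀ q : ℝ × (Fin 3 → ℝ),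
      dEta (dEta Φ) q
        + 2 * (deriv a q.1 / a q.1 - deriv (deriv φ) q.1 / deriv φ q.1) * dEta Φ q
        - lap Φ q
        + 2 * (deriv (fun t => deriv a t / a t) q.1
            - (deriv a q.1 / a q.1) * (deriv (deriv φ) q.1 / deriv φ q.1)) * Φ q
      = 0 := by
  have two_le : (2 : WithTop ℕ∞) ≤ ((⊤ : ℕ∞) : WithTop ℕ∞) := WithTop.coe_le_coe.mpr le_top
  intro q
  have ha₂ : ContDiff ℝ 2 a := ha.of_le two_le
  have hℋ : DifferentiableAt ℝ (fun t => deriv a t / a t) q.1 :=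
    (ha₂.differentiable_deriv_two _).div (ha₂.differentiable two_ne_zero _) (hapos q.1).ne'
  have hφ'd : DifferentiableAt ℝ (deriv φ) q.1 := (hφ.of_le two_le).differentiable_deriv_two _
  have hΦ₂ : ContDiff ℝ 2 Φ := hΦ.of_le two_le
  have hΦd : DifferentiableAt ℝ Φ q := hΦ₂.differentiable two_ne_zero q
  have hφ₁d : DifferentiableAt ℝ φ₁ q := hφ₁.differentiable (by simp) q
  have hℋq : DifferentiableAt ℝ (fun p : ℝ × (Fin 3 → ℝ) => deriv a p.1 / a p.1) q :=
    hℋ.comp q differentiableAt_fst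
  have hφ'q : DifferentiableAt ℝ (fun p : ℝ × (Fin 3 → ℝ) => deriv φ p.1) q :=
    hφ'd.comp q differentiableAt_fst
  have hdEtaΦ : DifferentiableAt ℝ (dEta Φ) q := differentiable_dEta hΦ₂ q
  have hEin2_dEta : dEta (dEta Φ) q
      + (deriv (fun t => deriv a t / a t) q.1 * Φ q + deriv a q.1 / a q.1 * dEta Φ q)
      = 4 * Real.pi * G * (dEta φ₁ q * deriv φ q.1 + φ₁ q * deriv (deriv φ) q.1) := by
    have h := congrArg (fun f => dEta f q) (funext hEin2)
    rw [dEta_add, dEta_mul, dEta_comp_fst hℋ, dEta_const_mul, dEta_mul, dEta_comp_fst hφ'd] at h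
    · exact h
    all_goals fun_prop
  have hφ'ne := hφ' q.1
  linear_combination (norm := skip) 2 * hEin2_dEta - hEin1 q - hEin3 q
    - 2 * (deriv (deriv φ) q.1 / deriv φ q.1) * hEin2 q
  field_simp
  ring

/-- On a spatially flat (`K = 0`) Friedmann background with scale factor `a(η)`,
`ℋ = a′/a`, homogeneous scalar field `φ(η)` with `φ′ ≠ 0` and potential `V`, the three
first-order Einstein equations for the gauge-invariant perturbations `Φ`, `φ₁` imply the
master equation
`∂_η²Φ + 2(ℋ − φ″/φ′)∂_ηΦ − ΔΦ + 2(ℋ′ − ℋφ″/φ′)Φ = 0`. -/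
theorem first_order_master_equation
    (G : ℝ)
    (a φ : ℝ → ℝ) (ha : ContDiff ℝ (⊤ : ℕ∞) a) (hapos : ∀ η, 0 < a η)
    (hφ : ContDiff ℝ (⊤ : ℕ∞) φ) (hφ' : ∀ η : ℝ, deriv φ η ≠ 0)
    (V : ℝ → ℝ) (hV : ContDiff ℝ (⊤ : ℕ∞) V)
    (Φ φ₁ : ℝ × (Fin 3 → ℝ) → ℝ)
    (hΦ : ContDiff ℝ (⊤ : ℕ∞) Φ) (hφ₁ : ContDiff ℝ (⊤ : ℕ∞) φ₁)
    (hEin1 : ∀ q : ℝ × (Fin 3 → ℝ),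
      lap Φ q - 3 * (deriv a q.1 / a q.1) * dEta Φ q
          - (deriv (fun t => deriv a t / a t) q.1 + 2 * (deriv a q.1 / a q.1) ^ 2) * Φ q
        = 4 * Real.pi * G
            * (dEta φ₁ q * deriv φ q.1 + (a q.1) ^ 2 * deriv V (φ q.1) * φ₁ q))
    (hEin2 : ∀ q : ℝ × (Fin 3 → ℝ),
      dEta Φ q + (deriv a q.1 / a q.1) * Φ q
        = 4 * Real.pi * G * (φ₁ q * deriv φ q.1))
    (hEin3 : ∀ q : ℝ × (Fin 3 → ℝ),
      dEta (dEta Φ) q + 3 * (deriv a q.1 / a q.1) * dEta Φ q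
          + (deriv (fun t => deriv a t / a t) q.1 + 2 * (deriv a q.1 / a q.1) ^ 2) * Φ q
        = 4 * Real.pi * G
            * (dEta φ₁ q * deriv φ q.1 - (a q.1) ^ 2 * deriv V (φ q.1) * φ₁ q)) :
    ∀ q : ℝ × (Fin 3 → ℝ),
      dEta (dEta Φ) q
        + 2 * (deriv a q.1 / a q.1 - deriv (deriv φ) q.1 / deriv φ q.1) * dEta Φ q
        - lap Φ q
        + 2 * (deriv (fun t => deriv a t / a t) q.1
            - (deriv a q.1 / a q.1) * (deriv (deriv φ) q.1 / deriv φ q.1)) * Φ q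
      = 0 :=
  first_order_master_equation_general G a φ ha hapos hφ hφ' V Φ φ₁ hΦ hφ₁ hEin1 hEin2 hEin3
end

section
/- Work on a spatially flat (K = 0) Friedmann background. Let G be a real constant with G ≠ 0, a : ℝ → ℝ a smooth positive function, φ : ℝ → ℝ smooth with φ′(η) ≠ 0 for all η, V : ℝ → ℝ smooth, and set ℋ := a′/a. Let Φ, φ₁ : ℝ × ℝ³ → ℝ be smooth, and let Δ denote the spatial Laplacian. Assume for all η the background Einstein equations ℋ² = (8πG/3)( (1/2)(φ′)² + a² V(φ) ) and 2ℋ′ + ℋ² = 8πG( −(1/2)(φ′)² + a² V(φ) ), and assume for all (η, x) the first-order Einstein equations: (i) ΔΦ − 3ℋ ∂_ηΦ − (ℋ′ + 2ℋ²) Φ = 4πG ( ∂_ηφ₁ · φ′ + a² V′(φ) φ₁ ); (ii) ∂_ηΦ + ℋ Φ = 4πG φ₁ φ′; (iii) ∂_η²Φ + 3ℋ ∂_ηΦ + (ℋ′ + 2ℋ²) Φ = 4πG ( ∂_ηφ₁ · φ′ − a² V′(φ) φ₁ ). Then the first-order perturbation of the Klein–Gordon equation holds: for all (η, x), ∂_η²φ₁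 + 2ℋ ∂_ηφ₁ − Δφ₁ − 4 ∂_ηΦ · φ′ + 2 a² V′(φ) Φ + a² V″(φ) φ₁ = 0. Hence the first-order Klein–Gordon equation is not independent of the background and first-order Einstein equations. -/
open Real

section DirectionalDerivatives

variable {E F : Type*} [NormedAddCommGroup E] [NormedSpace ℝ E]
  [NormedAddCommGroup F] [NormedSpace ℝ F]

theorem ContDiffAt.fderiv_fderiv_apply_comm {f : E → F} {x : E} (hf : ContDiffAt ℝ 2 f x)
    (v w : E) :
    fderiv ℝ (fun y => fderiv ℝ f y v) x w = fderiv ℝ (fun y => fderiv ℝ f y w) x v := by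
  have hf' : DifferentiableAt ℝ (fderiv ℝ f) x :=
    (hf.fderiv_right (m := 1) le_rfl).differentiableAt one_ne_zero
  rw [fderiv_clm_apply hf' (differentiableAt_const v),
    fderiv_clm_apply hf' (differentiableAt_const w)]
  simpa using hf.isSymmSndFDerivAt (by simp [minSmoothness_of_isRCLikeNormedField]) w v

theorem fderiv_fst_mul_apply {c : ℝ → ℝ} {f : ℝ × E → ℝ} {q : ℝ × E}
    (hc : DifferentiableAt ℝ c q.1) (hf : DifferentiableAt ℝ f q) (v : ℝ × E) :
    fderiv ℝ (fun p => c p.1 * f p) q v = v.1 * deriv c q.1 * f q + c q.1 * fderiv ℝ f q v := by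
  have hc' : HasFDerivAt (fun p : ℝ × E => c p.1)
      ((ContinuousLinearMap.smulRight (1 : ℝ →L[ℝ] ℝ) (deriv c q.1)).comp
        (ContinuousLinearMap.fst ℝ ℝ E)) q :=
    hc.hasDerivAt.hasFDerivAt.comp q hasFDerivAt_fst
  rw [(hc'.fun_mul hf.hasFDerivAt).fderiv]
  simp only [add_apply, smul_apply, smul_eq_mul,
    ContinuousLinearMap.comp_apply, ContinuousLinearMap.smulRight_apply,
    ContinuousLinearMap.coe_fst', one_apply_eq_self]
  ring

end DirectionalDerivatives

section PerturbationCalculus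

variable {f g : ℝ × (Fin 3 → ℝ) → ℝ} {c : ℝ → ℝ} {q : ℝ × (Fin 3 → ℝ)}
  {m n : WithTop ℕ∞}

theorem ContDiff.dEta (hf : ContDiff ℝ n f) (hmn : m + 1 ≤ n) : ContDiff ℝ m (dEta f) :=
  (hf.fderiv_right hmn).clm_apply contDiff_const

theorem ContDiff.dX (hf : ContDiff ℝ n f) (hmn : m + 1 ≤ n) (i : Fin 3) :
    ContDiff ℝ m (dX i f) :=
  (hf.fderiv_right hmn).clm_apply contDiff_const

theorem ContDiff.lap (hf : ContDiff ℝ n f) (hmn : m + 2 ≤ n) : ContDiff ℝ m (lap f) :=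
  ContDiff.sum fun i _ =>
    ((hf.dX (m := m + 1) (by rwa [add_assoc, one_add_one_eq_two]) i).dX le_rfl i)

theorem hasDerivAt_dEta {t : ℝ} {x : Fin 3 → ℝ} (hf : DifferentiableAt ℝ f (t, x)) :
    HasDerivAt (fun s => f (s, x)) (dEta f (t, x)) t :=
  hf.hasFDerivAt.comp_hasDerivAt t ((hasDerivAt_id' t).prodMk (hasDerivAt_const t x))

theorem dEta_sum {g : Fin 3 → ℝ × (Fin 3 → ℝ) → ℝ}
    (hg : ∀ i, DifferentiableAt ℝ (g i) q) :
    dEta (fun p => ∑ i, g i p) q = ∑ i, dEta (g i) q := by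
  simp only [dEta, fderiv_fun_sum fun i _ => hg i, sum_apply]

theorem dX_add (hf : DifferentiableAt ℝ f q) (hg : DifferentiableAt ℝ g q) (i : Fin 3) :
    dX i (fun p => f p + g p) q = dX i f q + dX i g q := by
  simp only [dX, fderiv_fun_add hf hg, add_apply]

theorem dX_fst_mul (hc : DifferentiableAt ℝ c q.1) (hf : DifferentiableAt ℝ f q) (i : Fin 3) :
    dX i (fun p => c p.1 * f p) q = c q.1 * dX i f q := by
  simp [dX, fderiv_fst_mul_apply hc hf]

theorem dX_dEta_comm (hf : ContDiffAt ℝ 2 f q) (i : Fin 3) :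
    dX i (dEta f) q = dEta (dX i f) q :=
  hf.fderiv_fderiv_apply_comm _ _

theorem lap_add (hf : ContDiff ℝ 2 f) (hg : ContDiff ℝ 2 g) (q : ℝ × (Fin 3 → ℝ)) :
    lap (fun p => f p + g p) q = lap f q + lap g q := by
  have hdX i : dX i (fun p => f p + g p) = fun p => dX i f p + dX i g p :=
    funext fun p => dX_add (hf.differentiable two_ne_zero p) (hg.differentiable two_ne_zero p) i
  have hdXdX i : dX i (fun p => dX i f p + dX i g p) q = dX i (dX i f) q + dX i (dX i g) q :=
    dX_add ((hf.dX one_add_one_eq_two.le i).differentiable one_ne_zero q)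
      ((hg.dX one_add_one_eq_two.le i).differentiable one_ne_zero q) i
  simp only [lap, hdX, hdXdX, Finset.sum_add_distrib]

theorem lap_fst_mul (hc : Differentiable ℝ c) (hf : ContDiff ℝ 2 f) (q : ℝ × (Fin 3 → ℝ)) :
    lap (fun p => c p.1 * f p) q = c q.1 * lap f q := by
  have hdX i : dX i (fun p => c p.1 * f p) = fun p => c p.1 * dX i f p :=
    funext fun p => dX_fst_mul (hc p.1) (hf.differentiable two_ne_zero p) i
  have hdXdX i : dX i (fun p => c p.1 * dX i f p) q = c q.1 * dX i (dX i f) q :=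
    dX_fst_mul (hc q.1) ((hf.dX one_add_one_eq_two.le i).differentiable one_ne_zero q) i
  simp only [lap, hdX, hdXdX, Finset.mul_sum]

theorem lap_dEta_comm (hf : ContDiff ℝ 3 f) (q : ℝ × (Fin 3 → ℝ)) :
    lap (dEta f) q = dEta (lap f) q := by
  have hdX i : dX i (dEta f) = dEta (dX i f) :=
    funext fun p => dX_dEta_comm ((hf.of_le (by norm_num)).contDiffAt) i
  have hdXdX i : dX i (dEta (dX i f)) q = dEta (dX i (dX i f)) q :=
    dX_dEta_comm ((hf.dX (by norm_num) i).contDiffAt) i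
  simp only [lap, hdX, hdXdX]
  exact (dEta_sum fun i =>
    ((hf.dX (m := 2) (by norm_num) i).dX (m := 1) le_rfl i).differentiable one_ne_zero q).symm

theorem lap_momentum_constraint {Φ φ₁ : ℝ × (Fin 3 → ℝ) → ℝ} {H c : ℝ → ℝ}
    (hΦ : ContDiff ℝ 3 Φ) (hφ₁ : ContDiff ℝ 2 φ₁) (hH : ContDiff ℝ 2 H)
    (hc : Differentiable ℝ c) (h : ∀ q, dEta Φ q + H q.1 * Φ q = c q.1 * φ₁ q)
    (q : ℝ × (Fin 3 → ℝ)) :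
    dEta (lap Φ) q + H q.1 * lap Φ q = c q.1 * lap φ₁ q := by
  have hΦ2 : ContDiff ℝ 2 Φ := hΦ.of_le (by norm_num)
  have hlap := congrArg (fun F => lap F q) (funext h)
  rwa [lap_add (g := fun p => H p.1 * Φ p) (hΦ.dEta (by norm_num))
      ((hH.comp contDiff_fst).mul hΦ2), lap_fst_mul (hH.differentiable two_ne_zero) hΦ2,
    lap_fst_mul hc hφ₁, lap_dEta_comm hΦ] at hlap

theorem dEta_hamiltonian_constraint {Φ φ₁ : ℝ × (Fin 3 → ℝ) → ℝ} {A B C D : ℝ → ℝ}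
    {A' B' C' D' t : ℝ} (hΦ : ContDiff ℝ 3 Φ) (hφ₁ : ContDiff ℝ 2 φ₁) (hA : HasDerivAt A A' t)
    (hB : HasDerivAt B B' t) (hC : HasDerivAt C C' t) (hD : HasDerivAt D D' t)
    (h : ∀ q, lap Φ q - A q.1 * dEta Φ q - B q.1 * Φ q = C q.1 * dEta φ₁ q + D q.1 * φ₁ q)
    (x : Fin 3 → ℝ) :
    dEta (lap Φ) (t, x) - (A' * dEta Φ (t, x) + A t * dEta (dEta Φ) (t, x))
        - (B' * Φ (t, x) + B t * dEta Φ (t, x))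
      = C' * dEta φ₁ (t, x) + C t * dEta (dEta φ₁) (t, x)
        + (D' * φ₁ (t, x) + D t * dEta φ₁ (t, x)) := by
  have hline {f : ℝ × (Fin 3 → ℝ) → ℝ} (hf : ContDiff ℝ 1 f) :=
    hasDerivAt_dEta (hf.differentiable one_ne_zero (t, x))
  have hL := ((hline (hΦ.lap (by norm_num))).sub (hA.mul (hline (hΦ.dEta (by norm_num))))).sub
    (hB.mul (hline (hΦ.of_le (by norm_num))))
  have hR := (hC.mul (hline (hφ₁.dEta (by norm_num)))).add
    (hD.mul (hline (hφ₁.of_le (by norm_num))))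
  exact hL.unique (hR.congr_of_eventuallyEq (.of_forall fun s => h (s, x)))

end PerturbationCalculus

section Background

variable {G : ℝ} {a φ V H : ℝ → ℝ}

theorem deriv_hubble_of_friedmann {t : ℝ}
    (hF1 : H t ^ 2 = (8 * π * G / 3) * ((1 / 2) * deriv φ t ^ 2 + a t ^ 2 * V (φ t)))
    (hF2 : 2 * deriv H t + H t ^ 2
      = 8 * π * G * (-(1 / 2) * deriv φ t ^ 2 + a t ^ 2 * V (φ t))) :
    deriv H t = H t ^ 2 - 4 * π * G * deriv φ t ^ 2 := by
  linear_combination hF2 / 2 - 3 / 2 * hF1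

theorem hasDerivAt_deriv_hubble {t : ℝ} (hH : DifferentiableAt ℝ H t)
    (hφ' : DifferentiableAt ℝ (deriv φ) t)
    (hdH : ∀ t, deriv H t = H t ^ 2 - 4 * π * G * deriv φ t ^ 2) :
    HasDerivAt (deriv H)
      (2 * H t * deriv H t - 8 * π * G * deriv φ t * deriv (deriv φ) t) t := by
  have h := (hH.hasDerivAt.fun_pow 2).sub ((hφ'.hasDerivAt.fun_pow 2).const_mul (4 * π * G))
  refine (h.congr_of_eventuallyEq (.of_forall hdH)).congr_deriv ?_
  norm_num
  ring

theorem background_klein_gordon (hG : G ≠ 0) (ha : Differentiable ℝ a) (hφ : Differentiable ℝ φ)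
    (hφ' : Differentiable ℝ (deriv φ)) (hV : Differentiable ℝ V) (hH : Differentiable ℝ H)
    (hF1 : ∀ t, H t ^ 2 = (8 * π * G / 3) * ((1 / 2) * deriv φ t ^ 2 + a t ^ 2 * V (φ t)))
    {t : ℝ} (hφt : deriv φ t ≠ 0) (hHa : deriv a t = H t * a t)
    (hdH : deriv H t = H t ^ 2 - 4 * π * G * deriv φ t ^ 2) :
    deriv (deriv φ) t + 2 * H t * deriv φ t + a t ^ 2 * deriv V (φ t) = 0 := by
  have hdF1 := ((hH t).hasDerivAt.fun_pow 2).unique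
    (((((hφ' t).hasDerivAt.fun_pow 2).const_mul (1 / 2)).add (((ha t).hasDerivAt.fun_pow 2).mul
      ((hV (φ t)).hasDerivAt.comp t (hφ t).hasDerivAt))).const_mul (8 * π * G / 3)
      |>.congr_of_eventuallyEq (.of_forall hF1))
  have hne : 8 * π * G / 3 * deriv φ t ≠ 0 := by positivity
  refine (mul_eq_zero.mp ?_).resolve_left hne
  norm_num at hdF1
  linear_combination
    -hdF1 + 2 * H t * hdH + 2 * H t * hF1 t - 2 * (8 * π * G / 3) * a t * V (φ t) * hHa

/-- On a spatially flat (`K = 0`) Friedmann background, the background Einstein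
equations together with the three first-order Einstein equations for the gauge-invariant
perturbations `Φ`, `φ₁` imply the first-order perturbed Klein–Gordon equation
`∂_η²φ₁ + 2ℋ∂_ηφ₁ − Δφ₁ − 4∂_ηΦ·φ′ + 2a²V′(φ)Φ + a²V″(φ)φ₁ = 0`;
hence the first-order Klein–Gordon equation is not independent of the background and
first-order Einstein equations. -/
theorem first_order_klein_gordon_from_einstein
    (G : ℝ) (hG : G ≠ 0)
    (a φ : ℝ → ℝ) (ha : ContDiff ℝ (⊤ : ℕ∞) a) (hapos : ∀ η, 0 < a η)
    (hφ : ContDiff ℝ (⊤ : ℕ∞) φ) (hφ' : ∀ η : ℝ, deriv φ η ≠ 0)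
    (V : ℝ → ℝ) (hV : ContDiff ℝ (⊤ : ℕ∞) V)
    (Φ φ₁ : ℝ × (Fin 3 → ℝ) → ℝ)
    (hΦ : ContDiff ℝ (⊤ : ℕ∞) Φ) (hφ₁ : ContDiff ℝ (⊤ : ℕ∞) φ₁)
    (hFriedmann1 : ∀ η : ℝ,
      (deriv a η / a η) ^ 2
        = (8 * Real.pi * G / 3) * ((1 / 2) * (deriv φ η) ^ 2 + (a η) ^ 2 * V (φ η)))
    (hFriedmann2 : ∀ η : ℝ,
      2 * deriv (fun t => deriv a t / a t) η + (deriv a η / a η) ^ 2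
        = 8 * Real.pi * G * (-(1 / 2) * (deriv φ η) ^ 2 + (a η) ^ 2 * V (φ η)))
    (hEin1 : ∀ q : ℝ × (Fin 3 → ℝ),
      lap Φ q - 3 * (deriv a q.1 / a q.1) * dEta Φ q
          - (deriv (fun t => deriv a t / a t) q.1 + 2 * (deriv a q.1 / a q.1) ^ 2) * Φ q
        = 4 * Real.pi * G
            * (dEta φ₁ q * deriv φ q.1 + (a q.1) ^ 2 * deriv V (φ q.1) * φ₁ q))
    (hEin2 : ∀ q : ℝ × (Fin 3 → ℝ),
      dEta Φ q + (deriv a q.1 / a q.1) * Φ q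
        = 4 * Real.pi * G * (φ₁ q * deriv φ q.1))
    (hEin3 : ∀ q : ℝ × (Fin 3 → ℝ),
      dEta (dEta Φ) q + 3 * (deriv a q.1 / a q.1) * dEta Φ q
          + (deriv (fun t => deriv a t / a t) q.1 + 2 * (deriv a q.1 / a q.1) ^ 2) * Φ q
        = 4 * Real.pi * G
            * (dEta φ₁ q * deriv φ q.1 - (a q.1) ^ 2 * deriv V (φ q.1) * φ₁ q)) :
    ∀ q : ℝ × (Fin 3 → ℝ),
      dEta (dEta φ₁) q + 2 * (deriv a q.1 / a q.1) * dEta φ₁ q - lap φ₁ q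
        - 4 * dEta Φ q * deriv φ q.1
        + 2 * (a q.1) ^ 2 * deriv V (φ q.1) * Φ q
        + (a q.1) ^ 2 * deriv (deriv V) (φ q.1) * φ₁ q
      = 0 := by
  have hdiff {f : ℝ → ℝ} (hf : ContDiff ℝ (⊤ : ℕ∞) f) : Differentiable ℝ f :=
    hf.differentiable (by simp)
  have hΦ3 : ContDiff ℝ 3 Φ := hΦ.of_le (by norm_cast)
  have hφ₁2 : ContDiff ℝ 2 φ₁ := hφ₁.of_le (by norm_cast)
  have hH : ContDiff ℝ (⊤ : ℕ∞) (fun t => deriv a t / a t) :=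
    (contDiff_infty_iff_deriv.mp ha).2.div ha fun t => (hapos t).ne'
  have hdφ := (contDiff_infty_iff_deriv.mp hφ).2
  have hdV := (contDiff_infty_iff_deriv.mp hV).2
  have hHa t : deriv a t = deriv a t / a t * a t := (div_mul_cancel₀ _ (hapos t).ne').symm
  have hdH t := deriv_hubble_of_friedmann (hFriedmann1 t) (hFriedmann2 t)
  rintro ⟨t, x⟩
  have hKG := background_klein_gordon hG (hdiff ha) (hdiff hφ) (hdiff hdφ) (hdiff hV) (hdiff hH)
    hFriedmann1 (hφ' t) (hHa t) (hdH t)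
  have hHt := (hdiff hH t).hasDerivAt
  have hD1 := dEta_hamiltonian_constraint
    (D := fun t => 4 * Real.pi * G * (a t ^ 2 * deriv V (φ t))) hΦ3 hφ₁2 (hHt.const_mul 3)
    ((hasDerivAt_deriv_hubble (hdiff hH t) (hdiff hdφ t) hdH).add ((hHt.fun_pow 2).const_mul 2))
    ((hdiff hdφ t).hasDerivAt.const_mul (4 * Real.pi * G))
    ((((hdiff ha t).hasDerivAt.fun_pow 2).mul
      ((hdiff hdV (φ t)).hasDerivAt.comp t (hdiff hφ t).hasDerivAt)).const_mul (4 * Real.pi * G))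
    (fun q => (hEin1 q).trans (by ring)) x
  have hL2 := lap_momentum_constraint (c := fun t => 4 * Real.pi * G * deriv φ t)
    hΦ3 hφ₁2 (hH.of_le (by norm_cast)) ((hdiff hdφ).const_mul _)
    (fun q => by rw [hEin2]; ring) (t, x)
  have hne : 4 * Real.pi * G * deriv φ t ≠ 0 := by have := hφ' t; positivity
  refine (mul_eq_zero.mp ?_).resolve_left hne
  norm_num at hD1
  linear_combination -hD1 + hL2 - deriv a t / a t * hEin1 (t, x)
    - 3 * (deriv a t / a t) * hEin3 (t, x)
    - 4 * (dEta Φ (t, x) + deriv a t / a t * Φ (t, x)) * hdH t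
    + 4 * Real.pi * G * (2 * deriv φ t * Φ (t, x) - dEta φ₁ (t, x)) * hKG
    - 8 * Real.pi * G * a t * deriv V (φ t) * φ₁ (t, x) * hHa t
end Background
end
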